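/- arXiv:2211.00452 — 10 statements merged into one kernel-verified Lean document; each statement's English description precedes it below -/
import Mathlib

section
/- Let m > 0 and a ≠ 0 be real constants, and let F, G : ℝ → ℝ be smooth and compactly supported. Consider the system of ODEs q'(t) = sin(θ(t)), θ'(t) = (a/(2m))·(F(q(t)+t) + G(q(t)−t))·cos²(θ(t)) − (a²/(2m))·sin(θ(t)) with initial conditions q(0) = 0, θ(0) = 0. Then there exists a global C¹ solution (q, θ) on [0, ∞), and for every ε > 0 there exists T > 0 such that for all t > T one has |sin(θ(t))| < ε (i.e., the particle's velocity q'(t) tends to 0 as t → ∞). -/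
open Real Set Filter


lemma abs_sin_sub_le (x y : ℝ) : |Real.sin x - Real.sin y| ≤ |x - y| := by
  rw [Real.sin_sub_sin]
  have h1 : |Real.sin ((x - y) / 2)| ≤ |(x - y) / 2| := Real.abs_sin_le_abs
  have h2 : |Real.cos ((x + y) / 2)| ≤ 1 := Real.abs_cos_le_one _
  have e : |2 * Real.sin ((x - y) / 2) * Real.cos ((x + y) / 2)|
      = 2 * |Real.sin ((x - y) / 2)| * |Real.cos ((x + y) / 2)| := by
    rw [abs_mul, abs_mul]; norm_num
  rw [abs_div, abs_two] at h1
  rw [e]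
  nlinarith [abs_nonneg (Real.sin ((x - y) / 2)), abs_nonneg ((x - y)), abs_nonneg (Real.cos ((x + y) / 2))]

lemma abs_cos_sub_le (x y : ℝ) : |Real.cos x - Real.cos y| ≤ |x - y| := by
  rw [Real.cos_sub_cos]
  have h1 : |Real.sin ((x - y) / 2)| ≤ |(x - y) / 2| := Real.abs_sin_le_abs
  have h2 : |Real.sin ((x + y) / 2)| ≤ 1 := Real.abs_sin_le_one _
  have e : |-2 * Real.sin ((x + y) / 2) * Real.sin ((x - y) / 2)|
      = 2 * |Real.sin ((x + y) / 2)| * |Real.sin ((x - y) / 2)| := by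
    rw [abs_mul, abs_mul]; norm_num
  rw [abs_div, abs_two] at h1
  rw [e]
  nlinarith [abs_nonneg (Real.sin ((x - y) / 2)), abs_nonneg ((x - y)), abs_nonneg (Real.sin ((x + y) / 2))]

lemma lip_of_compact (F : ℝ → ℝ) (hF : ContDiff ℝ (⊤ : ℕ∞) F) (hFc : HasCompactSupport F) :
    ∃ L, 0 ≤ L ∧ ∀ x y, |F x - F y| ≤ L * |x - y| := by
  obtain ⟨L', hL'⟩ :=
    (hF.continuous_deriv (by simp)).bounded_above_of_compact_support hFc.deriv
  refine ⟨max L' 0, le_max_right _ _, fun x y => ?_⟩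
  have hlip : LipschitzWith (max L' 0).toNNReal F := by
    apply lipschitzWith_of_nnnorm_deriv_le (hF.differentiable (by simp))
    intro x
    rw [← NNReal.coe_le_coe, coe_nnnorm, Real.coe_toNNReal _ (le_max_right _ _)]
    exact (hL' x).trans (le_max_left _ _)
  have := hlip.dist_le_mul x y
  rwa [Real.dist_eq, Real.dist_eq, Real.coe_toNNReal _ (le_max_right _ _)] at this

lemma global_ode (v : ℝ → (ℝ × ℝ) → (ℝ × ℝ)) (K : NNReal) (C : ℝ)
    (hlip : ∀ t, LipschitzWith K (v t))
    (hcont : ∀ x, Continuous fun t => v t x)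
    (hC : ∀ t x, ‖v t x‖ ≤ C) :
    ∃ f : ℝ → ℝ × ℝ, f 0 = 0 ∧ ∀ t, HasDerivAt f (v t (f t)) t := by
  have hC0 : 0 ≤ C := le_trans (norm_nonneg _) (hC 0 0)
  have hpl : ∀ n : ℕ, IsPicardLindelof v (tmin := -((n : ℝ) + 1)) (tmax := (n : ℝ) + 1)
      ⟨0, by constructor <;> [nlinarith [Nat.cast_nonneg (α := ℝ) n]; positivity]⟩ 0
      (C.toNNReal * (n + 1)) 0 C.toNNReal K := by
    intro n
    refine ⟨fun t _ => (hlip t).lipschitzOnWith,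
      fun x _ => (hcont x).continuousOn,
      fun t _ x _ => (hC t x).trans (Real.le_coe_toNNReal C), ?_⟩
    · have : max ((n : ℝ) + 1 - 0) (0 - -(n + 1)) = (n : ℝ) + 1 := by
        rw [sub_zero, zero_sub, neg_neg, max_self]
      simp only [this, NNReal.coe_mul, NNReal.coe_add, NNReal.coe_natCast, NNReal.coe_one,
        NNReal.coe_zero, sub_zero, zero_sub, neg_neg, max_self, le_refl]
  choose sol h0 hderiv using fun n => (hpl n).exists_eq_forall_mem_Icc_hasDerivWithinAt₀
  have key : ∀ (n : ℕ) (t : ℝ), t ∈ Ioo (-(n + 1) : ℝ) (n + 1) →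
      HasDerivAt (sol n) (v t (sol n t)) t := fun n t ht =>
    (hderiv n t (Ioo_subset_Icc_self ht)).hasDerivAt (Icc_mem_nhds ht.1 ht.2)
  have hzero : ∀ n : ℕ, (0 : ℝ) ∈ Ioo (-(n + 1) : ℝ) (n + 1) := by
    intro n
    constructor
    · nlinarith [Nat.cast_nonneg (α := ℝ) n]
    · positivity
  have agree : ∀ n m : ℕ, n ≤ m → EqOn (sol n) (sol m) (Ioo (-(n + 1) : ℝ) (n + 1)) := by
    intro n m hnm
    have hc : (n : ℝ) ≤ m := Nat.cast_le.2 hnm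
    have hsub : Ioo (-(n + 1) : ℝ) (n + 1) ⊆ Ioo (-(m + 1) : ℝ) (m + 1) :=
      Ioo_subset_Ioo (by linarith) (by linarith)
    exact ODE_solution_unique_of_mem_Ioo (s := fun _ => univ)
      (fun t _ => ((hlip t).lipschitzOnWith : LipschitzOnWith K (v t) univ)) (hzero n)
      (fun t ht => ⟨key n t ht, trivial⟩)
      (fun t ht => ⟨key m t (hsub ht), trivial⟩)
      ((h0 n).trans (h0 m).symm)
  set f : ℝ → ℝ × ℝ := fun t => sol ⌊|t|⌋₊ t with hf
  have hmem : ∀ t : ℝ, t ∈ Ioo (-((⌊|t|⌋₊ : ℝ) + 1)) ((⌊|t|⌋₊ : ℝ) + 1) := by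
    intro t
    have := Nat.lt_floor_add_one |t|
    rw [mem_Ioo, ← abs_lt]
    exact this
  refine ⟨f, ?_, fun t => ?_⟩
  · show sol ⌊|(0:ℝ)|⌋₊ 0 = 0
    simpa using h0 ⌊|(0:ℝ)|⌋₊
  · set n := ⌊|t|⌋₊ with hn
    have ht : t ∈ Ioo (-(n + 1) : ℝ) (n + 1) := hmem t
    have hev : f =ᶠ[nhds t] sol n := by
      filter_upwards [Ioo_mem_nhds ht.1 ht.2] with s hs
      show sol ⌊|s|⌋₊ s = sol n s
      rcases le_total ⌊|s|⌋₊ n with h | h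
      · exact agree _ _ h (hmem s)
      · exact (agree _ _ h hs).symm
    have hft : f t = sol n t := rfl
    rw [hft]
    exact (key n t ht).congr_of_eventuallyEq hev
lemma barrier {h dh : ℝ → ℝ} {b : ℝ}
    (hcont : Continuous h)
    (hd : ∀ t, 0 ≤ t → HasDerivAt h (dh t) t)
    (h0 : h 0 < b)
    (hb : ∀ t, 0 ≤ t → h t = b → dh t < 0) :
    ∀ t, 0 ≤ t → h t < b := by
  by_contra hcon
  push_neg at hcon
  obtain ⟨t', ht'0, ht'b⟩ := hcon
  set S : Set ℝ := Ici 0 ∩ h ⁻¹' Ici b with hS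
  have hSne : S.Nonempty := ⟨t', ht'0, ht'b⟩
  have hSbdd : BddBelow S := ⟨0, fun x hx => hx.1⟩
  have hScl : IsClosed S := isClosed_Ici.inter (isClosed_Ici.preimage hcont)
  set t₁ := sInf S with ht₁
  have ht₁S : t₁ ∈ S := hScl.csInf_mem hSne hSbdd
  have ht₁0 : 0 ≤ t₁ := ht₁S.1
  have ht₁pos : 0 < t₁ := by
    rcases ht₁0.lt_or_eq with h' | h'
    · exact h'
    · exfalso; have : b ≤ h 0 := by rw [h']; exact ht₁S.2
      linarith
  have hlt : ∀ s, 0 ≤ s → s < t₁ → h s < b := by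
    intro s hs0 hst
    by_contra hsb
    push_neg at hsb
    exact absurd (csInf_le hSbdd ⟨hs0, hsb⟩) (not_le.2 hst)
  have hle : h t₁ ≤ b := by
    have htend : Tendsto h (nhdsWithin t₁ (Iio t₁)) (nhds (h t₁)) :=
      (hcont.tendsto t₁).mono_left nhdsWithin_le_nhds
    refine le_of_tendsto htend ?_
    filter_upwards [Ioo_mem_nhdsLT_of_mem (⟨ht₁pos, le_rfl⟩ : t₁ ∈ Ioc 0 t₁)] with s hs
    exact (hlt s hs.1.le hs.2).le
  have heq : h t₁ = b := le_antisymm hle ht₁S.2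
  have hneg : dh t₁ < 0 := hb t₁ ht₁0 heq
  have hslope : Tendsto (slope h t₁) (nhdsWithin t₁ (Iio t₁)) (nhds (dh t₁)) :=
    (hasDerivAt_iff_tendsto_slope.mp (hd t₁ ht₁0)).mono_left
      (nhdsWithin_mono t₁ (fun s hs => ne_of_lt hs))
  have hev1 : ∀ᶠ s in nhdsWithin t₁ (Iio t₁), slope h t₁ s < 0 :=
    hslope.eventually_lt_const hneg
  have hev2 : ∀ᶠ s in nhdsWithin t₁ (Iio t₁), s ∈ Ioo (0 : ℝ) t₁ :=
    Ioo_mem_nhdsLT_of_mem (⟨ht₁pos, le_rfl⟩ : t₁ ∈ Ioc 0 t₁)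
  obtain ⟨s, hs1, hs2⟩ := (hev1.and hev2).exists
  have hnum : h s - h t₁ < 0 := by
    have := hlt s hs2.1.le hs2.2
    linarith [heq ▸ this]
  have hden : s - t₁ < 0 := by linarith [hs2.2]
  have : 0 < slope h t₁ s := by
    rw [slope_def_field]
    exact div_pos_of_neg_of_neg hnum hden
  linarith


private lemma abs_sub_le' (x y : ℝ) : |x - y| ≤ |x| + |y| := by
  rw [sub_eq_add_neg]
  exact (abs_add_le _ _).trans (by rw [abs_neg])

set_option maxHeartbeats 2000000 in
/-- Stability for positive bare mass: the ODE system
`q' = sin θ`, `θ' = (a/(2m))(F(q+t)+G(q−t))cos²θ − (a²/(2m)) sin θ`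
with `q(0)=0`, `θ(0)=0` has a global C¹ solution on `[0,∞)` whose velocity
`q' = sin θ` tends to zero. -/
theorem stability_positive_bare_mass
    (m a : ℝ) (hm : 0 < m) (ha : a ≠ 0)
    (F G : ℝ → ℝ) (hF : ContDiff ℝ (⊤ : ℕ∞) F) (hG : ContDiff ℝ (⊤ : ℕ∞) G)
    (hFc : HasCompactSupport F) (hGc : HasCompactSupport G) :
    ∃ q θ : ℝ → ℝ,
      q 0 = 0 ∧ θ 0 = 0 ∧
      (∀ t ∈ Set.Ici (0 : ℝ),
        HasDerivAt q (sin (θ t)) t ∧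
        HasDerivAt θ
          ((a / (2 * m)) * (F (q t + t) + G (q t - t)) * cos (θ t) ^ 2
            - (a ^ 2 / (2 * m)) * sin (θ t)) t) ∧
      (∀ ε > (0 : ℝ), ∃ T > (0 : ℝ), ∀ t > T, |sin (θ t)| < ε) := by
  -- basic constants
  have hkk : 0 < a ^ 2 / (2 * m) :=
    div_pos ((sq_nonneg a).lt_of_ne (Ne.symm (pow_ne_zero 2 ha))) (by linarith)
  set kk := a ^ 2 / (2 * m) with hkkdef
  set cc := a / (2 * m) with hccdef
  -- bounds on F, G
  obtain ⟨MF, hMF0, hMF⟩ : ∃ M, 0 ≤ M ∧ ∀ x, |F x| ≤ M := by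
    obtain ⟨M, hM⟩ := hF.continuous.bounded_above_of_compact_support hFc
    exact ⟨max M 0, le_max_right _ _,
      fun x => le_trans (Real.norm_eq_abs (F x) ▸ hM x) (le_max_left _ _)⟩
  obtain ⟨MG, hMG0, hMG⟩ : ∃ M, 0 ≤ M ∧ ∀ x, |G x| ≤ M := by
    obtain ⟨M, hM⟩ := hG.continuous.bounded_above_of_compact_support hGc
    exact ⟨max M 0, le_max_right _ _,
      fun x => le_trans (Real.norm_eq_abs (G x) ▸ hM x) (le_max_left _ _)⟩
  obtain ⟨LF, hLF0, hLF⟩ := lip_of_compact F hF hFc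
  obtain ⟨LG, hLG0, hLG⟩ := lip_of_compact G hG hGc
  -- the vector field
  set V : ℝ → ℝ × ℝ → ℝ × ℝ := fun t x =>
    (Real.sin x.2,
      cc * (F (x.1 + t) + G (x.1 - t)) * Real.cos x.2 ^ 2 - kk * Real.sin x.2) with hVdef
  set Kr : ℝ := 1 + |cc| * (LF + LG) + |cc| * (2 * (MF + MG)) + kk with hKrdef
  have hKr0 : 0 ≤ Kr := by positivity
  have hKr1 : 1 ≤ Kr := by nlinarith [abs_nonneg cc, hkk]
  set Cb : ℝ := 1 + |cc| * (MF + MG) + kk with hCbdef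
  -- Lipschitz estimate
  have hlip : ∀ t, LipschitzWith Kr.toNNReal (V t) := by
    intro t
    apply LipschitzWith.of_dist_le_mul
    intro x y
    rw [Real.coe_toNNReal _ hKr0, Prod.dist_eq]
    have hd1 : dist x.1 y.1 ≤ dist x y := by rw [Prod.dist_eq]; exact le_max_left _ _
    have hd2 : dist x.2 y.2 ≤ dist x y := by rw [Prod.dist_eq]; exact le_max_right _ _
    have hdist0 : 0 ≤ dist x y := dist_nonneg
    apply max_le
    · have : dist (Real.sin x.2) (Real.sin y.2) ≤ dist x.2 y.2 := by
        rw [Real.dist_eq, Real.dist_eq]; exact abs_sin_sub_le _ _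
      nlinarith
    · rw [Real.dist_eq]
      set P := F (x.1 + t) + G (x.1 - t) with hP
      set Q := F (y.1 + t) + G (y.1 - t) with hQ
      have hPQ : |P - Q| ≤ (LF + LG) * |x.1 - y.1| := by
        have e : P - Q = (F (x.1 + t) - F (y.1 + t)) + (G (x.1 - t) - G (y.1 - t)) := by
          rw [hP, hQ]; ring
        rw [e]
        refine (abs_add_le _ _).trans ?_
        have h1 := hLF (x.1 + t) (y.1 + t)
        have h2 := hLG (x.1 - t) (y.1 - t)
        have e1 : x.1 + t - (y.1 + t) = x.1 - y.1 := by ring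
        have e2 : x.1 - t - (y.1 - t) = x.1 - y.1 := by ring
        rw [e1] at h1; rw [e2] at h2
        nlinarith
      have hQb : |Q| ≤ MF + MG := (abs_add_le _ _).trans (add_le_add (hMF _) (hMG _))
      have hcos2 : |Real.cos x.2 ^ 2 - Real.cos y.2 ^ 2| ≤ 2 * |x.2 - y.2| := by
        have e : Real.cos x.2 ^ 2 - Real.cos y.2 ^ 2
            = (Real.cos x.2 - Real.cos y.2) * (Real.cos x.2 + Real.cos y.2) := by ring
        rw [e, abs_mul]
        have h1 := abs_cos_sub_le x.2 y.2
        have h2 : |Real.cos x.2 + Real.cos y.2| ≤ 2 := by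
          refine (abs_add_le _ _).trans ?_
          linarith [Real.abs_cos_le_one x.2, Real.abs_cos_le_one y.2]
        nlinarith [abs_nonneg (Real.cos x.2 - Real.cos y.2), abs_nonneg (x.2 - y.2)]
      have hsin : |Real.sin x.2 - Real.sin y.2| ≤ |x.2 - y.2| := abs_sin_sub_le _ _
      have e : cc * P * Real.cos x.2 ^ 2 - kk * Real.sin x.2
          - (cc * Q * Real.cos y.2 ^ 2 - kk * Real.sin y.2)
          = cc * (P - Q) * Real.cos x.2 ^ 2 + cc * Q * (Real.cos x.2 ^ 2 - Real.cos y.2 ^ 2)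
            + (-(kk * (Real.sin x.2 - Real.sin y.2))) := by ring
      rw [e]
      have t1 : |cc * (P - Q) * Real.cos x.2 ^ 2| ≤ |cc| * ((LF + LG) * |x.1 - y.1|) := by
        rw [abs_mul, abs_mul]
        have hc2 : |Real.cos x.2 ^ 2| ≤ 1 := by
          rw [abs_of_nonneg (sq_nonneg _)]; exact Real.cos_sq_le_one _
        calc |cc| * |P - Q| * |Real.cos x.2 ^ 2|
            ≤ |cc| * ((LF + LG) * |x.1 - y.1|) * 1 := by gcongr
          _ = |cc| * ((LF + LG) * |x.1 - y.1|) := mul_one _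
      have t2 : |cc * Q * (Real.cos x.2 ^ 2 - Real.cos y.2 ^ 2)|
          ≤ |cc| * ((MF + MG) * (2 * |x.2 - y.2|)) := by
        rw [abs_mul, abs_mul]
        calc |cc| * |Q| * |Real.cos x.2 ^ 2 - Real.cos y.2 ^ 2|
            ≤ |cc| * (MF + MG) * (2 * |x.2 - y.2|) := by gcongr
          _ = |cc| * ((MF + MG) * (2 * |x.2 - y.2|)) := by ring
      have t3 : |-(kk * (Real.sin x.2 - Real.sin y.2))| ≤ kk * |x.2 - y.2| := by
        rw [abs_neg, abs_mul, abs_of_nonneg hkk.le]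
        exact mul_le_mul_of_nonneg_left hsin hkk.le
      refine (abs_add_three _ _ _).trans ?_
      have hxy1 : |x.1 - y.1| ≤ dist x y := by rw [← Real.dist_eq]; exact hd1
      have hxy2 : |x.2 - y.2| ≤ dist x y := by rw [← Real.dist_eq]; exact hd2
      have u1 : |cc| * ((LF + LG) * |x.1 - y.1|) ≤ |cc| * (LF + LG) * dist x y := by
        rw [← mul_assoc]
        exact mul_le_mul_of_nonneg_left hxy1 (by positivity)
      have u2 : |cc| * ((MF + MG) * (2 * |x.2 - y.2|)) ≤ |cc| * (2 * (MF + MG)) * dist x y := by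
        rw [show |cc| * ((MF + MG) * (2 * |x.2 - y.2|))
            = |cc| * (2 * (MF + MG)) * |x.2 - y.2| from by ring]
        exact mul_le_mul_of_nonneg_left hxy2 (by positivity)
      have u3 : kk * |x.2 - y.2| ≤ kk * dist x y := mul_le_mul_of_nonneg_left hxy2 hkk.le
      have hKexp : Kr * dist x y = |cc| * (LF + LG) * dist x y
          + |cc| * (2 * (MF + MG)) * dist x y + kk * dist x y + dist x y := by
        rw [hKrdef]; ring
      linarith
  -- continuity in time
  have hcont : ∀ x : ℝ × ℝ, Continuous fun t => V t x := by
    intro x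
    apply Continuous.prodMk continuous_const
    exact (((continuous_const.mul
      ((hF.continuous.comp (continuous_const.add continuous_id)).add
        (hG.continuous.comp (continuous_const.sub continuous_id)))).mul
          continuous_const).sub continuous_const)
  -- norm bound
  have hCb : ∀ t x, ‖V t x‖ ≤ Cb := by
    intro t x
    rw [Prod.norm_def]
    apply max_le
    · rw [Real.norm_eq_abs]
      have h1 := Real.abs_sin_le_one x.2
      have h2 : (0:ℝ) ≤ |cc| * (MF + MG) := by positivity
      linarith
    · rw [Real.norm_eq_abs]
      refine (abs_sub_le' _ _).trans ?_
      have h1 : |cc * (F (x.1 + t) + G (x.1 - t)) * Real.cos x.2 ^ 2| ≤ |cc| * (MF + MG) := by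
        rw [abs_mul, abs_mul]
        have hQb : |F (x.1 + t) + G (x.1 - t)| ≤ MF + MG :=
          (abs_add_le _ _).trans (add_le_add (hMF _) (hMG _))
        have hc2 : |Real.cos x.2 ^ 2| ≤ 1 := by
          rw [abs_of_nonneg (sq_nonneg _)]; exact Real.cos_sq_le_one _
        calc |cc| * |F (x.1 + t) + G (x.1 - t)| * |Real.cos x.2 ^ 2|
            ≤ |cc| * (MF + MG) * 1 := by gcongr
          _ = |cc| * (MF + MG) := mul_one _
      have h2 : |kk * Real.sin x.2| ≤ kk := by
        rw [abs_mul, abs_of_nonneg hkk.le]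
        calc kk * |Real.sin x.2| ≤ kk * 1 :=
            mul_le_mul_of_nonneg_left (Real.abs_sin_le_one x.2) hkk.le
          _ = kk := mul_one _
      linarith
  -- global solution
  obtain ⟨f, hf0, hfd⟩ := global_ode V Kr.toNNReal Cb hlip hcont hCb
  set q : ℝ → ℝ := fun t => (f t).1 with hqdef
  set θ : ℝ → ℝ := fun t => (f t).2 with hθdef
  have hq0 : q 0 = 0 := by rw [hqdef]; simp [hf0]
  have hθ0 : θ 0 = 0 := by rw [hθdef]; simp [hf0]
  set D : ℝ → ℝ := fun t =>
    (a / (2 * m)) * (F (q t + t) + G (q t - t)) * Real.cos (θ t) ^ 2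
      - (a ^ 2 / (2 * m)) * Real.sin (θ t) with hDdef
  have hq : ∀ t, HasDerivAt q (Real.sin (θ t)) t := fun t => (hfd t).fst
  have hθ : ∀ t, HasDerivAt θ (D t) t := fun t => (hfd t).snd
  have hθc : Continuous θ := by
    rw [continuous_iff_continuousAt]; exact fun t => (hθ t).continuousAt
  have hqc : Continuous q := by
    rw [continuous_iff_continuousAt]; exact fun t => (hq t).continuousAt
  clear hlip hcont hCb hfd hf0 hKrdef hKr0 hKr1 hCbdef hVdef hqdef hθdef
  clear_value D
  clear_value q θ
  clear V f Kr Cb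
  clear_value kk cc
  -- constants for the invariant region
  set Amax : ℝ := |cc| * (MF + MG) with hAmaxdef
  have hAmax0 : 0 ≤ Amax := by positivity
  clear_value Amax
  set dl : ℝ := min (π / 4) (kk / (2 * (Amax + 1))) with hdldef
  have hdl0 : 0 < dl := lt_min (by positivity) (div_pos hkk (by linarith only [hAmax0]))
  have hdl4 : dl ≤ π / 4 := min_le_left _ _
  have hdl2 : 2 * (Amax + 1) * dl ≤ kk := by
    have h := min_le_right (π / 4) (kk / (2 * (Amax + 1)))
    rw [← hdldef] at h
    rw [mul_comm]
    exact (le_div_iff₀ (by linarith only [hAmax0])).mp h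
  clear_value dl
  have hdl1 : dl ≤ 1 := hdl4.trans (by linarith only [Real.pi_le_four])
  have hdlpi : dl ≤ π := by linarith only [Real.pi_gt_three, hdl4]
  set b : ℝ := π / 2 - dl with hbdef
  clear_value b
  have hb0 : 0 < b := by
    rw [hbdef]; linarith only [Real.pi_gt_three, hdl4]
  have hbltpi2 : b ≤ π / 2 := by rw [hbdef]; linarith only [hdl0]
  have hbpi : b ≤ π := by rw [hbdef]; linarith only [Real.pi_gt_three, hdl0]
  have hsindl : 0 < Real.sin dl :=
    Real.sin_pos_of_pos_of_lt_pi hdl0 (by linarith only [Real.pi_gt_three, hdl4])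
  have hsindl_le : Real.sin dl ≤ dl := by
    have h := Real.abs_sin_le_abs (x := dl)
    rw [abs_of_nonneg hdl0.le] at h
    exact (le_abs_self _).trans h
  have hcosdl_half : 1 / 2 < Real.cos dl := by
    have h1 : Real.cos (π / 4) ≤ Real.cos dl :=
      Real.cos_le_cos_of_nonneg_of_le_pi hdl0.le (by linarith only [Real.pi_gt_three]) hdl4
    rw [Real.cos_pi_div_four] at h1
    have h2 : (1 : ℝ) < Real.sqrt 2 := by
      nlinarith only [Real.sq_sqrt (show (0:ℝ) ≤ 2 by norm_num), Real.sqrt_nonneg 2]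
    linarith only [h1, h2]
  have hcosdl1 : Real.cos dl < 1 := by
    have h := Real.cos_lt_cos_of_nonneg_of_le_pi (le_refl (0:ℝ)) hdlpi hdl0
    rwa [Real.cos_zero] at h
  -- forcing bound
  have hforce : ∀ t, |cc * (F (q t + t) + G (q t - t))| ≤ Amax := by
    intro t
    rw [abs_mul, hAmaxdef]
    exact mul_le_mul_of_nonneg_left
      ((abs_add_le _ _).trans (add_le_add (hMF _) (hMG _))) (abs_nonneg cc)
  -- the core quantitative estimate
  have hcore : Amax * Real.sin dl ^ 2 < kk * Real.cos dl := by
    have hs2 : Real.sin dl ^ 2 ≤ dl := by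
      nlinarith only [hsindl_le, hsindl, hdl1, hdl0]
    have hA : Amax * Real.sin dl ^ 2 ≤ Amax * dl := mul_le_mul_of_nonneg_left hs2 hAmax0
    have hKc : 0 < kk * (Real.cos dl - 1 / 2) :=
      mul_pos hkk (by linarith only [hcosdl_half])
    nlinarith only [hA, hdl2, hkk, hAmax0, hdl0, hKc]
  -- barrier conditions
  have cond1 : ∀ t, 0 ≤ t → θ t = b → D t < 0 := by
    intro t ht hθb
    have hDt : D t = cc * (F (q t + t) + G (q t - t)) * Real.sin dl ^ 2
        - kk * Real.cos dl := by
      simp only [hDdef]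
      rw [← hkkdef, ← hccdef, hθb, hbdef, Real.cos_pi_div_two_sub, Real.sin_pi_div_two_sub]
    rw [hDt]
    have h1 : cc * (F (q t + t) + G (q t - t)) ≤ Amax := (le_abs_self _).trans (hforce t)
    have h2 : cc * (F (q t + t) + G (q t - t)) * Real.sin dl ^ 2 ≤ Amax * Real.sin dl ^ 2 :=
      mul_le_mul_of_nonneg_right h1 (sq_nonneg _)
    linarith only [h2, hcore]
  have cond2 : ∀ t, 0 ≤ t → θ t = -b → 0 < D t := by
    intro t ht hθb
    have hDt : D t = cc * (F (q t + t) + G (q t - t)) * Real.sin dl ^ 2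
        + kk * Real.cos dl := by
      simp only [hDdef]
      rw [← hkkdef, ← hccdef, hθb, Real.cos_neg, Real.sin_neg, hbdef,
        Real.cos_pi_div_two_sub, Real.sin_pi_div_two_sub]
      ring
    rw [hDt]
    have h1 : -Amax ≤ cc * (F (q t + t) + G (q t - t)) := neg_le_of_abs_le (hforce t)
    have h2 : -Amax * Real.sin dl ^ 2 ≤ cc * (F (q t + t) + G (q t - t)) * Real.sin dl ^ 2 :=
      mul_le_mul_of_nonneg_right h1 (sq_nonneg _)
    nlinarith only [h2, hcore]
  -- invariance
  have hup : ∀ t, 0 ≤ t → θ t < b :=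
    barrier hθc (fun t _ => hθ t) (by rw [hθ0]; exact hb0) cond1
  have hdown : ∀ t, 0 ≤ t → -b < θ t := by
    have h := barrier (b := b) (h := fun t => -θ t) (dh := fun t => -D t) hθc.neg
      (fun t _ => (hθ t).neg)
      (by show -θ 0 < b; rw [hθ0]; simpa using hb0)
      (fun t ht hb' => by
        have h3 : -θ t = b := hb'
        have hθt : θ t = -b := by linarith only [h3]
        show -D t < 0
        linarith only [cond2 t ht hθt])
    intro t ht
    have h2 : -θ t < b := h t ht
    linarith only [h2]
  -- velocity and cosine bounds
  have hsin_le : ∀ t, 0 ≤ t → Real.sin (θ t) ≤ Real.cos dl := by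
    intro t ht
    have hd := hdown t ht
    have ha1 : -(π / 2) ≤ θ t := by linarith [hd, hbltpi2]
    have h1 : Real.sin (θ t) ≤ Real.sin b :=
      Real.sin_le_sin_of_le_of_le_pi_div_two ha1 hbltpi2 (hup t ht).le
    rwa [hbdef, Real.sin_pi_div_two_sub] at h1
  have hsin_ge : ∀ t, 0 ≤ t → -Real.cos dl ≤ Real.sin (θ t) := by
    intro t ht
    have hu := hup t ht
    have ha1 : -(π / 2) ≤ -b := by linarith [hbltpi2]
    have ha2 : θ t ≤ π / 2 := by linarith [hu, hbltpi2]
    have h1 : Real.sin (-b) ≤ Real.sin (θ t) :=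
      Real.sin_le_sin_of_le_of_le_pi_div_two ha1 ha2 (hdown t ht).le
    rwa [Real.sin_neg, hbdef, Real.sin_pi_div_two_sub] at h1
  have hcos_ge : ∀ t, 0 ≤ t → Real.sin dl ≤ Real.cos (θ t) := by
    intro t ht
    have habs : |θ t| ≤ b := abs_le.mpr ⟨(hdown t ht).le, (hup t ht).le⟩
    have h1 : Real.cos b ≤ Real.cos |θ t| :=
      Real.cos_le_cos_of_nonneg_of_le_pi (abs_nonneg _) hbpi habs
    rw [Real.cos_abs, hbdef, Real.cos_pi_div_two_sub] at h1
    exact h1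
  -- growth of the characteristics
  set rr : ℝ := 1 - Real.cos dl with hrrdef
  clear_value rr
  have hrr0 : 0 < rr := by rw [hrrdef]; linarith only [hcosdl1]
  have hgrow1 : ∀ t, 0 ≤ t → rr * t ≤ q t + t := by
    intro t ht
    set g : ℝ → ℝ := fun s => q s + s - rr * s with hgdef
    have hgd : ∀ s, HasDerivAt g (Real.sin (θ s) + 1 - rr * 1) s := fun s =>
      ((hq s).add (hasDerivAt_id s)).sub ((hasDerivAt_id s).const_mul rr)
    have hmono : MonotoneOn g (Ici 0) := by
      apply monotoneOn_of_deriv_nonneg (convex_Ici 0)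
        (Continuous.continuousOn (by
          rw [continuous_iff_continuousAt]; exact fun s => (hgd s).continuousAt))
        (fun s _ => (hgd s).differentiableAt.differentiableWithinAt)
      intro s hs
      rw [interior_Ici] at hs
      rw [(hgd s).deriv]
      have h1 := hsin_ge s hs.le
      rw [hrrdef]; linarith only [h1]
    have h := hmono (self_mem_Ici) (mem_Ici.mpr ht) ht
    have hg0 : g 0 = 0 := by simp only [hgdef]; simp [hq0]
    rw [hg0] at h
    simp only [hgdef] at h
    linarith only [h]
  have hgrow2 : ∀ t, 0 ≤ t → q t - t ≤ -(rr * t) := by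
    intro t ht
    set g : ℝ → ℝ := fun s => q s - s + rr * s with hgdef
    have hgd : ∀ s, HasDerivAt g (Real.sin (θ s) - 1 + rr * 1) s := fun s =>
      ((hq s).sub (hasDerivAt_id s)).add ((hasDerivAt_id s).const_mul rr)
    have hanti : AntitoneOn g (Ici 0) := by
      apply antitoneOn_of_deriv_nonpos (convex_Ici 0)
        (Continuous.continuousOn (by
          rw [continuous_iff_continuousAt]; exact fun s => (hgd s).continuousAt))
        (fun s _ => (hgd s).differentiableAt.differentiableWithinAt)
      intro s hs
      rw [interior_Ici] at hs
      rw [(hgd s).deriv]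
      have h1 := hsin_le s hs.le
      rw [hrrdef]; linarith only [h1]
    have h := hanti (self_mem_Ici) (mem_Ici.mpr ht) ht
    have hg0 : g 0 = 0 := by simp only [hgdef]; simp [hq0]
    rw [hg0] at h
    simp only [hgdef] at h
    linarith only [h]
  -- support radius
  obtain ⟨R, hR0, hRF, hRG⟩ :
      ∃ R, 0 ≤ R ∧ (∀ x, R < |x| → F x = 0) ∧ (∀ x, R < |x| → G x = 0) := by
    obtain ⟨rF, hrF⟩ := hFc.isBounded.subset_closedBall 0
    obtain ⟨rG, hrG⟩ := hGc.isBounded.subset_closedBall 0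
    refine ⟨max (max rF rG) 0, le_max_right _ _, fun x hx => ?_, fun x hx => ?_⟩
    · apply image_eq_zero_of_notMem_tsupport
      intro hmem
      have h1 := hrF hmem
      rw [Metric.mem_closedBall, Real.dist_eq, sub_zero] at h1
      have h2 : |x| ≤ max (max rF rG) 0 :=
        h1.trans ((le_max_left _ _).trans (le_max_left _ _))
      linarith only [hx, h2]
    · apply image_eq_zero_of_notMem_tsupport
      intro hmem
      have h1 := hrG hmem
      rw [Metric.mem_closedBall, Real.dist_eq, sub_zero] at h1
      have h2 : |x| ≤ max (max rF rG) 0 :=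
        h1.trans ((le_max_right _ _).trans (le_max_left _ _))
      linarith only [hx, h2]
  set T1 : ℝ := (R + 1) / rr + 1 with hT1def
  clear_value T1
  have hrrne : rr ≠ 0 := ne_of_gt hrr0
  have hT1pos : 0 < T1 := by
    rw [hT1def]
    have h1 : 0 ≤ (R + 1) / rr := div_nonneg (by linarith only [hR0]) hrr0.le
    linarith only [h1]
  have hvanish : ∀ t, T1 ≤ t → F (q t + t) = 0 ∧ G (q t - t) = 0 := by
    intro t ht
    have ht0 : 0 ≤ t := hT1pos.le.trans ht
    have hrt : R + 1 + rr ≤ rr * t := by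
      have h1 : rr * T1 ≤ rr * t := mul_le_mul_of_nonneg_left ht hrr0.le
      have h2 : rr * T1 = R + 1 + rr := by
        rw [hT1def]; field_simp
      linarith only [h1, h2]
    constructor
    · apply hRF
      have h1 : R + 1 + rr ≤ q t + t := hrt.trans (hgrow1 t ht0)
      have h2 : R < q t + t := by linarith only [h1, hrr0]
      exact h2.trans_le (le_abs_self _)
    · apply hRG
      have h1 : q t - t ≤ -(R + 1 + rr) := by
        have h := hgrow2 t ht0
        linarith only [h, hrt]
      have h2 : R < -(q t - t) := by linarith only [h1, hrr0]
      exact h2.trans_le (neg_le_abs _)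
  have hDlate : ∀ t, T1 ≤ t → D t = -(kk * Real.sin (θ t)) := by
    intro t ht
    simp only [hDdef]
    rw [(hvanish t ht).1, (hvanish t ht).2, hkkdef]
    ring
  -- the Lyapunov function
  set w : ℝ → ℝ := fun s => Real.sin (θ s) ^ 2 * Real.exp (2 * kk * Real.sin dl * s)
    with hwdef
  have hwd : ∀ s, HasDerivAt w
      (2 * Real.sin (θ s) * (Real.cos (θ s) * D s)
          * Real.exp (2 * kk * Real.sin dl * s)
        + Real.sin (θ s) ^ 2
          * (Real.exp (2 * kk * Real.sin dl * s) * (2 * kk * Real.sin dl))) s := by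
    intro s
    have h1 : HasDerivAt (fun u => Real.sin (θ u)) (Real.cos (θ s) * D s) s :=
      (Real.hasDerivAt_sin (θ s)).comp s (hθ s)
    have h2 : HasDerivAt (fun u => Real.sin (θ u) ^ 2)
        (2 * Real.sin (θ s) * (Real.cos (θ s) * D s)) s := by
      have := h1.pow 2
      norm_num at this
      exact this
    have h3 : HasDerivAt (fun u => Real.exp (2 * kk * Real.sin dl * u))
        (Real.exp (2 * kk * Real.sin dl * s) * (2 * kk * Real.sin dl)) s := by
      have := (Real.hasDerivAt_exp (2 * kk * Real.sin dl * s)).comp s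
        ((hasDerivAt_id s).const_mul (2 * kk * Real.sin dl))
      simpa [mul_one, Function.comp_def] using this
    exact h2.mul h3
  clear_value w
  have hwanti : AntitoneOn w (Ici T1) := by
    apply antitoneOn_of_deriv_nonpos (convex_Ici T1)
      (Continuous.continuousOn (by
        rw [continuous_iff_continuousAt]; exact fun s => (hwd s).continuousAt))
      (fun s _ => (hwd s).differentiableAt.differentiableWithinAt)
    intro s hs
    rw [interior_Ici] at hs
    have hsT1 : T1 ≤ s := hs.le
    have hs0 : 0 ≤ s := hT1pos.le.trans hsT1
    rw [(hwd s).deriv, hDlate s hsT1]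
    have hcos := hcos_ge s hs0
    have hexp := Real.exp_pos (2 * kk * Real.sin dl * s)
    nlinarith only [hcos, hexp, hkk,
      mul_nonneg (mul_nonneg (mul_nonneg (sub_nonneg.2 hcos) hkk.le) hexp.le)
        (sq_nonneg (Real.sin (θ s)))]
  -- conclusion
  refine ⟨q, θ, hq0, hθ0, fun t _ => ⟨hq t, by
    have h := hθ t
    simp only [hDdef] at h
    rw [hccdef, hkkdef]
    exact h⟩, ?_⟩
  intro ε hε
  set c0 : ℝ := kk * Real.sin dl with hc0def
  clear_value c0
  have hc0 : 0 < c0 := by rw [hc0def]; exact mul_pos hkk hsindl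
  have hc0ne : c0 ≠ 0 := ne_of_gt hc0
  refine ⟨T1 + 1 + |Real.log ε| / c0, by
    have h1 : 0 ≤ |Real.log ε| / c0 := div_nonneg (abs_nonneg _) hc0.le
    linarith only [h1, hT1pos], fun t ht => ?_⟩
  set T : ℝ := T1 + 1 + |Real.log ε| / c0 with hTdef
  clear_value T
  have hT1T : T1 ≤ T := by
    rw [hTdef]
    have h1 : 0 ≤ |Real.log ε| / c0 := by positivity
    linarith only [h1]
  have htT1 : T1 ≤ t := hT1T.trans ht.le
  have hw1 : w t ≤ w T1 := hwanti self_mem_Ici (mem_Ici.mpr htT1) htT1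
  have hsq : Real.sin (θ t) ^ 2 * Real.exp (2 * c0 * t) ≤ Real.exp (2 * c0 * T1) := by
    have h1 : w T1 ≤ Real.exp (2 * kk * Real.sin dl * T1) := by
      simp only [hwdef]
      have ha1 := mul_nonneg (sub_nonneg.2 (Real.sin_sq_le_one (θ T1)))
        (Real.exp_pos (2 * kk * Real.sin dl * T1)).le
      nlinarith only [ha1]
    have h2 := hw1.trans h1
    simp only [hwdef] at h2
    calc Real.sin (θ t) ^ 2 * Real.exp (2 * c0 * t)
        = Real.sin (θ t) ^ 2 * Real.exp (2 * kk * Real.sin dl * t) := by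
          rw [hc0def]; ring_nf
      _ ≤ Real.exp (2 * kk * Real.sin dl * T1) := h2
      _ = Real.exp (2 * c0 * T1) := by rw [hc0def]; ring_nf
  have hsq2 : Real.sin (θ t) ^ 2 ≤ Real.exp (c0 * (T1 - t)) ^ 2 := by
    have hEq : Real.exp (c0 * (T1 - t)) ^ 2
        = Real.exp (2 * c0 * T1) / Real.exp (2 * c0 * t) := by
      rw [sq, ← Real.exp_add, ← Real.exp_sub]
      ring_nf
    rw [hEq, le_div_iff₀ (Real.exp_pos _)]
    exact hsq
  have habs : |Real.sin (θ t)| ≤ Real.exp (c0 * (T1 - t)) := by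
    nlinarith only [hsq2, abs_nonneg (Real.sin (θ t)), sq_abs (Real.sin (θ t)),
      Real.exp_pos (c0 * (T1 - t)), sq_nonneg (|Real.sin (θ t)| - Real.exp (c0 * (T1 - t)))]
  have hfin : Real.exp (c0 * (T1 - t)) < ε := by
    have h1 : c0 * (T1 - t) < c0 * (T1 - T) :=
      mul_lt_mul_of_pos_left (by linarith only [ht]) hc0
    have h2 : c0 * (T1 - T) = -c0 - |Real.log ε| := by
      rw [hTdef]; field_simp; ring
    have h3 : c0 * (T1 - t) < Real.log ε := by
      have h4 := neg_abs_le (Real.log ε)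
      linarith only [h1, h2, h4, hc0]
    calc Real.exp (c0 * (T1 - t)) < Real.exp (Real.log ε) := Real.exp_lt_exp.mpr h3
      _ = ε := Real.exp_log hε
  exact lt_of_le_of_lt habs hfin
end

section
/- Let q : ℝ → ℝ be a C¹ function with |q'(x)| < 1 for all x, q(0) = 0, and let a ∈ ℝ. For t > 0 define Ψ(t, s) = (a/2)·λ{τ ∈ [0, t] : s − (t − τ) ≤ q(τ) ≤ s + (t − τ)}, where λ denotes Lebesgue measure. Then Ψ(t, s) = 0 if s < −t or s > t; Ψ(t, s) = (a/2)·T₊(s+t) if −t < s < q(t), where T₊(s+t) is the unique τ ∈ (0,t) with q(τ) + τ = s + t; and Ψ(t, s) = (a/2)·T₋(s−t) if q(t) < s < t, where T₋(s−t) is the unique τ ∈ (0,t) with q(τ) − τ = s − t. -/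
/-!
Since `|q'| < 1`, the retarded-time functions `τ ↦ q τ + τ` and `τ ↦ q τ - τ` are strictly
increasing and strictly decreasing, and the light-cone condition `s - (t - τ) ≤ q τ ≤ s + (t - τ)`
reads `s - t ≤ q τ - τ` and `q τ + τ ≤ s + t`. Both functions vanish at `τ = 0`, so the set of
such `τ ∈ [0, t]` is empty outside the light cone of the origin. To the left of the particle
the second condition is the binding one and the set is `[0, T₊(s + t)]`. The region to the right
of the particle is the mirror image under `(q, s) ↦ (-q, -s)`, which leaves `Ψ` unchanged.
-/

open Real MeasureTheory

/-- The Duhamel solution `Ψ(t,s)` of the 1D wave equation sourced by a point charge of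
charge `a` moving along a subluminal trajectory `q`: `(a/2)` times the Lebesgue measure of
the set of times `τ ∈ [0, t]` at which the particle lies inside the backward light cone
of the event `(t, s)`. -/
noncomputable def Psi (a : ℝ) (q : ℝ → ℝ) (t s : ℝ) : ℝ :=
  (a / 2) *
    (volume {τ : ℝ | τ ∈ Set.Icc 0 t ∧ s - (t - τ) ≤ q τ ∧ q τ ≤ s + (t - τ)}).toReal

open Set

def lightConeTimes (q : ℝ → ℝ) (t s : ℝ) : Set ℝ :=
  {τ : ℝ | τ ∈ Icc 0 t ∧ s - (t - τ) ≤ q τ ∧ q τ ≤ s + (t - τ)}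

lemma Psi_eq_volume_lightConeTimes (a : ℝ) (q : ℝ → ℝ) (t s : ℝ) :
    Psi a q t s = (a / 2) * (volume (lightConeTimes q t s)).toReal :=
  rfl

lemma lightConeTimes_neg (q : ℝ → ℝ) (t s : ℝ) :
    lightConeTimes (-q) t (-s) = lightConeTimes q t s := by
  ext τ
  simp only [lightConeTimes, mem_ofPred_eq, Pi.neg_apply]
  constructor <;> rintro ⟨hτ, h₁, h₂⟩ <;> exact ⟨hτ, by linarith, by linarith⟩

lemma Psi_neg (a : ℝ) (q : ℝ → ℝ) (t s : ℝ) : Psi a (-q) t (-s) = Psi a q t s := by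
  rw [Psi_eq_volume_lightConeTimes, Psi_eq_volume_lightConeTimes, lightConeTimes_neg]

section

variable {q : ℝ → ℝ} {t s : ℝ}

lemma strictMono_add_id_of_neg_one_lt_deriv (hq : Differentiable ℝ q)
    (h : ∀ x, -1 < deriv q x) : StrictMono fun τ => q τ + τ := by
  refine strictMono_of_deriv_pos fun x => ?_
  have hd : HasDerivAt (fun τ => q τ + τ) (deriv q x + 1) x :=
    (hq x).hasDerivAt.add (hasDerivAt_id x)
  rw [hd.deriv]
  linarith [h x]

lemma strictAnti_sub_id_of_deriv_lt_one (hq : Differentiable ℝ q)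
    (h : ∀ x, deriv q x < 1) : StrictAnti fun τ => q τ - τ := by
  refine strictAnti_of_deriv_neg fun x => ?_
  have hd : HasDerivAt (fun τ => q τ - τ) (deriv q x - 1) x :=
    (hq x).hasDerivAt.sub (hasDerivAt_id x)
  rw [hd.deriv]
  linarith [h x]

lemma lightConeTimes_eq_empty (hf : Monotone fun τ => q τ + τ) (hq0 : q 0 = 0) (hs : s < -t) :
    lightConeTimes q t s = ∅ := by
  refine eq_empty_of_forall_notMem fun τ ⟨⟨hτ0, _⟩, _, hτs⟩ => ?_
  have : q 0 + 0 ≤ q τ + τ := hf hτ0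
  linarith

lemma lightConeTimes_eq_Icc (hf : StrictMono fun τ => q τ + τ) (hg : Antitone fun τ => q τ - τ)
    {τ₀ : ℝ} (hτ₀t : τ₀ ≤ t) (hτ₀ : q τ₀ + τ₀ = s + t) :
    lightConeTimes q t s = Icc 0 τ₀ := by
  ext τ
  simp only [lightConeTimes, mem_ofPred_eq, mem_Icc]
  constructor
  · rintro ⟨⟨hτ0, _⟩, _, hτs⟩
    exact ⟨hτ0, hf.le_iff_le.mp (by linarith)⟩
  · rintro ⟨hτ0, hττ₀⟩
    have hg' : q τ₀ - τ₀ ≤ q τ - τ := hg hττ₀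
    have hf' : q τ + τ ≤ q τ₀ + τ₀ := hf.monotone hττ₀
    exact ⟨⟨hτ0, hττ₀.trans hτ₀t⟩, by linarith, by linarith⟩

lemma Psi_eq_zero_of_lt_neg (hq : Differentiable ℝ q) (hq' : ∀ x, |deriv q x| < 1)
    (hq0 : q 0 = 0) (a : ℝ) (hs : s < -t) : Psi a q t s = 0 := by
  have hf := strictMono_add_id_of_neg_one_lt_deriv hq fun x => (abs_lt.mp (hq' x)).1
  simp [Psi_eq_volume_lightConeTimes, lightConeTimes_eq_empty hf.monotone hq0 hs]

lemma Psi_eq_of_add_eq (hq : Differentiable ℝ q) (hq' : ∀ x, |deriv q x| < 1) (a : ℝ)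
    {τ : ℝ} (hτ : τ ∈ Icc 0 t) (hτs : q τ + τ = s + t) : Psi a q t s = (a / 2) * τ := by
  have hf := strictMono_add_id_of_neg_one_lt_deriv hq fun x => (abs_lt.mp (hq' x)).1
  have hg := strictAnti_sub_id_of_deriv_lt_one hq fun x => (abs_lt.mp (hq' x)).2
  rw [Psi_eq_volume_lightConeTimes, lightConeTimes_eq_Icc hf hg.antitone hτ.2 hτs,
    Real.volume_Icc, sub_zero, ENNReal.toReal_ofReal hτ.1]

end

theorem Psi_eval_general
    (q : ℝ → ℝ) (hq : ContDiff ℝ 1 q) (hq' : ∀ x, |deriv q x| < 1) (hq0 : q 0 = 0)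
    (a : ℝ) (t : ℝ) :
    (∀ s : ℝ, s < -t ∨ t < s → Psi a q t s = 0) ∧
    (∀ s : ℝ, -t < s → s < q t →
      ∀ τ ∈ Set.Ioo (0 : ℝ) t, q τ + τ = s + t → Psi a q t s = (a / 2) * τ) ∧
    (∀ s : ℝ, q t < s → s < t →
      ∀ τ ∈ Set.Ioo (0 : ℝ) t, q τ - τ = s - t → Psi a q t s = (a / 2) * τ) := by
  have hdq : Differentiable ℝ q := hq.differentiable one_ne_zero
  have hdnq : Differentiable ℝ (-q) := hdq.neg
  have hnq' : ∀ x, |deriv (-q) x| < 1 := by simpa [deriv.neg] using hq'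
  refine ⟨?_, fun s _ _ τ hτ hτs => Psi_eq_of_add_eq hdq hq' a (Ioo_subset_Icc_self hτ) hτs,
    fun s _ _ τ hτ hτs => ?_⟩
  · rintro s (hs | hs)
    · exact Psi_eq_zero_of_lt_neg hdq hq' hq0 a hs
    · rw [← Psi_neg, Psi_eq_zero_of_lt_neg hdnq hnq' (by simp [hq0]) a (by linarith)]
  · rw [← Psi_neg, Psi_eq_of_add_eq hdnq hnq' a (Ioo_subset_Icc_self hτ)
      (by simp only [Pi.neg_apply]; linarith)]

/-- Evaluation of the Duhamel solution `Ψ`: it vanishes outside the light cone of the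
origin, equals `(a/2)·T₊(s+t)` to the left of the particle, and `(a/2)·T₋(s−t)` to its
right, where `T₊(s+t)`, `T₋(s−t)` are the retarded times. -/
theorem Psi_eval
    (q : ℝ → ℝ) (hq : ContDiff ℝ 1 q) (hq' : ∀ x, |deriv q x| < 1) (hq0 : q 0 = 0)
    (a : ℝ) (t : ℝ) (ht : 0 < t) :
    (∀ s : ℝ, s < -t ∨ t < s → Psi a q t s = 0) ∧
    (∀ s : ℝ, -t < s → s < q t →
      ∀ τ ∈ Set.Ioo (0 : ℝ) t, q τ + τ = s + t → Psi a q t s = (a / 2) * τ) ∧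
    (∀ s : ℝ, q t < s → s < t →
      ∀ τ ∈ Set.Ioo (0 : ℝ) t, q τ - τ = s - t → Psi a q t s = (a / 2) * τ) :=
  Psi_eval_general q hq hq' hq0 a t
end

section
/- Let q : ℝ → ℝ be a C¹ function with |q'(x)| < 1 for all x, q(0) = 0 and q'(0) = 0, and let a ∈ ℝ. Define w(t, s) for t > 0 piecewise by: w = (a/2)·s for s ≤ −t; w = (a/2)·(T₊(s+t) − t) for −t ≤ s < q(t); w = (a/2)·(T₋(s−t) − t) for q(t) < s ≤ t; and w = −(a/2)·s for s ≥ t, where T₊ is the inverse of x ↦ q(x) + x and T₋ is the inverse of x ↦ q(x) − x. Then w is differentiable at every point (t, −t) with t > 0, with ∂ₛw = a/2 and ∂ₜw = 0 there, and w is differentiable at every point (t, t) with t > 0, with ∂ₛw = −a/2 and ∂ₜw = 0 there. -/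
/-!
Since `|q'| < 1`, `x ↦ q x + x` is strictly monotone and `x ↦ q x - x` strictly antitone, so
`Tp` and `Tm` are their continuous inverses, `|q t| < t`, and `q'(0) = 0` gives `Tp'(0) = 1`, `Tm'(0) = -1`.
Near `(t, -t)` only the first two pieces of `w` occur: the first is `(a/2) s` and the second
`(a/2) (Tp (s + t) - t)` has differential `(a/2) (Tp'(0) (ds + dt) - dt) = (a/2) ds` there, and
both take the value `-(a/2) t`. Two pieces with equal value and differential at a point paste to a
function differentiable there. The same argument with `Tm` works at `(t, t)`.
-/

open Real

open Function Filter Topology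

section RightInverse

variable {α β : Type*} [LinearOrder α] [TopologicalSpace α] [OrderTopology α]
  [LinearOrder β] [TopologicalSpace β] [OrderTopology β] {f : α → β} {g : β → α}

theorem StrictMono.continuous_of_rightInverse (hf : StrictMono f) (hfg : RightInverse g f) :
    Continuous g :=
  (hf.orderIsoOfRightInverse f g hfg).symm.continuous

theorem StrictAnti.continuous_of_rightInverse (hf : StrictAnti f) (hfg : RightInverse g f) :
    Continuous g :=
  (StrictMono.continuous_of_rightInverse (f := OrderDual.toDual ∘ f) hf.dual_right
    (g := g ∘ OrderDual.ofDual) hfg).comp continuous_toDual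

end RightInverse

theorem hasDerivAt_rightInverse_of_injective {𝕜 : Type*} [NontriviallyNormedField 𝕜]
    {f g : 𝕜 → 𝕜} {f' x : 𝕜} (hf : Injective f) (hg : Continuous g) (hfg : RightInverse g f)
    (hd : HasDerivAt f f' x) (hf' : f' ≠ 0) :
    HasDerivAt g f'⁻¹ (f x) :=
  HasDerivAt.of_local_left_inverse hg.continuousAt (by rwa [hfg.leftInverse_of_injective hf x])
    hf' (Eventually.of_forall hfg)

theorem HasFDerivAt.of_eventually_eq_or_eq {𝕜 E F : Type*} [NontriviallyNormedField 𝕜]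
    [NormedAddCommGroup E] [NormedSpace 𝕜 E] [NormedAddCommGroup F] [NormedSpace 𝕜 F]
    {f f₁ f₂ : E → F} {f' : E →L[𝕜] F} {x : E} (h₁ : HasFDerivAt f₁ f' x)
    (h₂ : HasFDerivAt f₂ f' x) (hx₁ : f x = f₁ x) (hx₂ : f x = f₂ x)
    (h : ∀ᶠ y in 𝓝 x, f y = f₁ y ∨ f y = f₂ y) : HasFDerivAt f f' x :=
  ((h₁.hasFDerivWithinAt.congr (s := {y | f y = f₁ y}) (fun _ hy => hy) hx₁).union
    (h₂.hasFDerivWithinAt.congr (s := {y | f y = f₂ y}) (fun _ hy => hy) hx₂)).hasFDerivAt h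

section LightCone

variable {q : ℝ → ℝ}

theorem strictMono_add_self_of_abs_deriv_lt_one (hq : Differentiable ℝ q)
    (hq' : ∀ x, |deriv q x| < 1) : StrictMono fun x => q x + x :=
  strictMono_of_hasDerivAt_pos (fun x => (hq x).hasDerivAt.add (hasDerivAt_id' x))
    fun x => by linarith [(abs_lt.1 (hq' x)).1]

theorem strictAnti_sub_self_of_abs_deriv_lt_one (hq : Differentiable ℝ q)
    (hq' : ∀ x, |deriv q x| < 1) : StrictAnti fun x => q x - x :=
  strictAnti_of_hasDerivAt_neg (fun x => (hq x).hasDerivAt.sub (hasDerivAt_id' x))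
    fun x => by linarith [(abs_lt.1 (hq' x)).2]

noncomputable def singularField (q Tp Tm : ℝ → ℝ) (a : ℝ) (p : ℝ × ℝ) : ℝ :=
  if p.2 ≤ -p.1 then (a / 2) * p.2
  else if p.2 < q p.1 then (a / 2) * (Tp (p.2 + p.1) - p.1)
  else if p.2 ≤ p.1 then (a / 2) * (Tm (p.2 - p.1) - p.1)
  else -(a / 2) * p.2

variable {Tp Tm : ℝ → ℝ} {a t : ℝ}

theorem hasFDerivAt_singularField_of_neg_lt (hq : Continuous q) (hTp : HasDerivAt Tp 1 0)
    (hTp0 : Tp 0 = 0) (hqt : -t < q t) :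
    HasFDerivAt (singularField q Tp Tm a) ((a / 2) • ContinuousLinearMap.snd ℝ ℝ ℝ) (t, -t) := by
  have hTp' : HasDerivAt Tp 1 ((fun p : ℝ × ℝ => p.2 + p.1) (t, -t)) := by simpa using hTp
  have hcone : ∀ᶠ p : ℝ × ℝ in 𝓝 (t, -t), p.2 < q p.1 :=
    ContinuousAt.eventually_lt (by fun_prop) (by fun_prop) hqt
  refine HasFDerivAt.of_eventually_eq_or_eq (f₁ := fun p => (a / 2) * p.2)
    (f₂ := fun p => (a / 2) * (Tp (p.2 + p.1) - p.1)) (hasFDerivAt_snd.const_mul (a / 2)) ?_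
    (by simp [singularField]) (by simp [singularField, hTp0]) ?_
  · have hsum : HasFDerivAt (fun p : ℝ × ℝ => p.2 + p.1)
        (ContinuousLinearMap.snd ℝ ℝ ℝ + ContinuousLinearMap.fst ℝ ℝ ℝ) (t, -t) :=
      hasFDerivAt_snd.add hasFDerivAt_fst
    refine (((hTp'.comp_hasFDerivAt (t, -t) hsum).sub
      hasFDerivAt_fst).const_mul (a / 2)).congr_fderiv ?_
    ext <;> simp
  · filter_upwards [hcone] with p hp
    unfold singularField
    split_ifs <;> simp_all

theorem hasFDerivAt_singularField_of_lt (hq : Continuous q) (hTm : HasDerivAt Tm (-1) 0)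
    (hTm0 : Tm 0 = 0) (ht : 0 < t) (hqt : q t < t) :
    HasFDerivAt (singularField q Tp Tm a) ((-(a / 2)) • ContinuousLinearMap.snd ℝ ℝ ℝ) (t, t) := by
  have hTm' : HasDerivAt Tm (-1) ((fun p : ℝ × ℝ => p.2 - p.1) (t, t)) := by simpa using hTm
  have hdiff : HasFDerivAt (fun p : ℝ × ℝ => p.2 - p.1)
      (ContinuousLinearMap.snd ℝ ℝ ℝ - ContinuousLinearMap.fst ℝ ℝ ℝ) (t, t) :=
    hasFDerivAt_snd.sub hasFDerivAt_fst
  have hcone : ∀ᶠ p : ℝ × ℝ in 𝓝 (t, t), -p.1 < p.2 :=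
    ContinuousAt.eventually_lt (by fun_prop) (by fun_prop) (by simpa using neg_lt_self ht)
  have hparticle : ∀ᶠ p : ℝ × ℝ in 𝓝 (t, t), q p.1 < p.2 :=
    ContinuousAt.eventually_lt (by fun_prop) (by fun_prop) hqt
  refine HasFDerivAt.of_eventually_eq_or_eq (f₁ := fun p => (a / 2) * (Tm (p.2 - p.1) - p.1))
    (f₂ := fun p => -(a / 2) * p.2) ?_ (hasFDerivAt_snd.const_mul (-(a / 2)))
    (by simp [singularField, ht.not_ge, hqt.not_gt, hTm0])
    (by simp [singularField, ht.not_ge, hqt.not_gt, hTm0]) ?_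
  · refine (((hTm'.comp_hasFDerivAt (t, t) hdiff).sub
      hasFDerivAt_fst).const_mul (a / 2)).congr_fderiv ?_
    ext <;> simp
  · filter_upwards [hcone, hparticle] with p hp₁ hp₂
    unfold singularField
    split_ifs <;> first | linarith | simp

end LightCone

theorem singular_field_C1_across_light_cone_general
    (q : ℝ → ℝ) (hq : ContDiff ℝ 1 q) (hq' : ∀ x, |deriv q x| < 1)
    (hq0 : q 0 = 0) (hq'0 : deriv q 0 = 0)
    (a : ℝ) (Tp Tm : ℝ → ℝ)
    (hTp' : ∀ y, q (Tp y) + Tp y = y)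
    (hTm' : ∀ y, q (Tm y) - Tm y = y)
    (w : ℝ × ℝ → ℝ)
    (hw : ∀ p : ℝ × ℝ, w p =
      if p.2 ≤ -p.1 then (a / 2) * p.2
      else if p.2 < q p.1 then (a / 2) * (Tp (p.2 + p.1) - p.1)
      else if p.2 ≤ p.1 then (a / 2) * (Tm (p.2 - p.1) - p.1)
      else -(a / 2) * p.2) :
    ∀ t : ℝ, 0 < t →
      HasFDerivAt w ((a / 2) • ContinuousLinearMap.snd ℝ ℝ ℝ) (t, -t) ∧
      HasFDerivAt w ((-(a / 2)) • ContinuousLinearMap.snd ℝ ℝ ℝ) (t, t) := by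
  intro t ht
  have hqd : Differentiable ℝ q := hq.differentiable one_ne_zero
  have hP := strictMono_add_self_of_abs_deriv_lt_one hqd hq'
  have hM := strictAnti_sub_self_of_abs_deriv_lt_one hqd hq'
  have hTp0 : Tp 0 = 0 := hP.injective (by simp [hTp' 0, hq0])
  have hTm0 : Tm 0 = 0 := hM.injective (by simp [hTm' 0, hq0])
  have hdTp : HasDerivAt Tp 1 0 := by
    simpa [hq0, hq'0] using hasDerivAt_rightInverse_of_injective hP.injective
      (hP.continuous_of_rightInverse hTp') hTp' ((hqd 0).hasDerivAt.add (hasDerivAt_id' 0))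
      (by simp [hq'0])
  have hdTm : HasDerivAt Tm (-1) 0 := by
    simpa [hq0, hq'0] using hasDerivAt_rightInverse_of_injective hM.injective
      (hM.continuous_of_rightInverse hTm') hTm' ((hqd 0).hasDerivAt.sub (hasDerivAt_id' 0))
      (by simp [hq'0])
  have hinside : -t < q t ∧ q t < t := by
    have h₁ := hP ht
    have h₂ := hM ht
    simp only [hq0] at h₁ h₂
    constructor <;> linarith
  rw [show w = singularField q Tp Tm a from funext hw]
  exact ⟨hasFDerivAt_singularField_of_neg_lt hq.continuous hdTp hTp0 hinside.1,
    hasFDerivAt_singularField_of_lt hq.continuous hdTm hTm0 ht hinside.2⟩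

/-- The singular part `w = U + Ψ` of the field is differentiable across the light cone
`s = ±t` of the origin, with `∂ₛw = ±a/2` and `∂ₜw = 0` there: the singularities of `U`
and `Ψ` along the light cone cancel because the particle starts at rest. -/
theorem singular_field_C1_across_light_cone
    (q : ℝ → ℝ) (hq : ContDiff ℝ 1 q) (hq' : ∀ x, |deriv q x| < 1)
    (hq0 : q 0 = 0) (hq'0 : deriv q 0 = 0)
    (a : ℝ) (Tp Tm : ℝ → ℝ)
    (hTp : ∀ x, Tp (q x + x) = x) (hTp' : ∀ y, q (Tp y) + Tp y = y)
    (hTm : ∀ x, Tm (q x - x) = x) (hTm' : ∀ y, q (Tm y) - Tm y = y)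
    (w : ℝ × ℝ → ℝ)
    (hw : ∀ p : ℝ × ℝ, w p =
      if p.2 ≤ -p.1 then (a / 2) * p.2
      else if p.2 < q p.1 then (a / 2) * (Tp (p.2 + p.1) - p.1)
      else if p.2 ≤ p.1 then (a / 2) * (Tm (p.2 - p.1) - p.1)
      else -(a / 2) * p.2) :
    ∀ t : ℝ, 0 < t →
      HasFDerivAt w ((a / 2) • ContinuousLinearMap.snd ℝ ℝ ℝ) (t, -t) ∧
      HasFDerivAt w ((-(a / 2)) • ContinuousLinearMap.snd ℝ ℝ ℝ) (t, t) :=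
  singular_field_C1_across_light_cone_general q hq hq' hq0 hq'0 a Tp Tm hTp' hTm' w hw
end

section
/- Let a ∈ ℝ, v ∈ ℝ with |v| < 1, and V_s, V_t ∈ ℝ. Define w_s⁻ = (a/2)/(v+1), w_s⁺ = (a/2)/(v−1), w_t⁻ = −(a/2)·v/(v+1), w_t⁺ = −(a/2)·v/(v−1), and set u_s^± = V_s + w_s^±, u_t^± = V_t + w_t^±. Then −v·(u_s⁺u_t⁺ − u_s⁻u_t⁻) − (1/2)·((u_s⁺)² + (u_t⁺)² − (u_s⁻)² − (u_t⁻)²) = a·V_s − (a²/2)·v/(1 − v²). -/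
open Real

/-- The Kiessling force identity: with `u = V + w` split into a smooth part `V` and the
singular part `w`, the momentum-balance force `f = −v·[uₛuₜ] − (1/2)·[uₛ² + uₜ²]`
across the particle path equals `a·Vₛ − (a²/2)·v/(1 − v²)`. -/
theorem kiessling_force_formula
    (a v Vs Vt : ℝ) (hv : |v| < 1)
    (wsm wsp wtm wtp usm usp utm utp : ℝ)
    (hwsm : wsm = (a / 2) / (v + 1))
    (hwsp : wsp = (a / 2) / (v - 1))
    (hwtm : wtm = -(a / 2) * v / (v + 1))
    (hwtp : wtp = -(a / 2) * v / (v - 1))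
    (husm : usm = Vs + wsm) (husp : usp = Vs + wsp)
    (hutm : utm = Vt + wtm) (hutp : utp = Vt + wtp) :
    -v * (usp * utp - usm * utm) - (1 / 2) * (usp ^ 2 + utp ^ 2 - usm ^ 2 - utm ^ 2)
      = a * Vs - (a ^ 2 / 2) * v / (1 - v ^ 2) := by
  have h1 : v + 1 ≠ 0 := by
    rcases abs_lt.mp hv with ⟨h, _⟩; linarith
  have h2 : v - 1 ≠ 0 := by
    rcases abs_lt.mp hv with ⟨_, h⟩; linarith
  have h3 : 1 - v ^ 2 ≠ 0 := by
    intro h; apply h1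
    have : (v + 1) * (v - 1) = 0 := by ring_nf; linarith [h]
    rcases mul_eq_zero.mp this with h' | h'
    · exact h'
    · exact absurd h' h2
  subst husm husp hutm hutp hwsm hwsp hwtm hwtp
  field_simp
  ring
end

section
/- Let a ≠ 0 and m > 0 be real constants and let F, G : ℝ → ℝ be continuous and bounded. Suppose (d, b, θ) is a C¹ solution on [t₁, t₂] of the system d' = sin θ + 1, b' = sin θ − 1, θ' = (a/(2m))·(F(d) + G(b))·cos²θ − (a²/(2m))·sin θ, with |θ(t₁)| < π/2. Then |θ(t)| < π/2 for all t ∈ [t₁, t₂]. -/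
open Real

/-- Barrier argument for positive bare mass: along any C¹ solution of the system
`d' = sin θ + 1`, `b' = sin θ − 1`,
`θ' = (a/(2m))(F(d)+G(b))cos²θ − (a²/(2m)) sin θ`,
the angle `θ` can never cross `±π/2`: if `|θ(t₁)| < π/2` then `|θ(t)| < π/2`
throughout `[t₁, t₂]`. -/
theorem theta_stays_below_barrier
    (a m : ℝ) (ha : a ≠ 0) (hm : 0 < m)
    (F G : ℝ → ℝ) (hF : Continuous F) (hG : Continuous G)
    (hFb : ∃ M, ∀ x, |F x| ≤ M) (hGb : ∃ M, ∀ x, |G x| ≤ M)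
    (t₁ t₂ : ℝ) (ht : t₁ ≤ t₂)
    (d b θ : ℝ → ℝ)
    (hode : ∀ t ∈ Set.Icc t₁ t₂,
      HasDerivAt d (sin (θ t) + 1) t ∧
      HasDerivAt b (sin (θ t) - 1) t ∧
      HasDerivAt θ
        ((a / (2 * m)) * (F (d t) + G (b t)) * cos (θ t) ^ 2
          - (a ^ 2 / (2 * m)) * sin (θ t)) t)
    (hθ₁ : |θ t₁| < π / 2) :
    ∀ t ∈ Set.Icc t₁ t₂, |θ t| < π / 2 := by
  by_contra hcon
  push_neg at hcon
  obtain ⟨t₀, ht₀, hθt₀⟩ := hcon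
  have hθderiv : ∀ t ∈ Set.Icc t₁ t₂,
      HasDerivAt θ
        ((a / (2 * m)) * (F (d t) + G (b t)) * cos (θ t) ^ 2
          - (a ^ 2 / (2 * m)) * sin (θ t)) t := fun t htt => (hode t htt).2.2
  have hθcont : ContinuousOn θ (Set.Icc t₁ t₂) := fun t htt =>
    ((hθderiv t htt).continuousAt).continuousWithinAt
  set A : Set ℝ := Set.Icc t₁ t₂ ∩ θ ⁻¹' {y | π / 2 ≤ |y|} with hAdef
  have hAne : A.Nonempty := ⟨t₀, ht₀, hθt₀⟩
  have hAbdd : BddBelow A := ⟨t₁, fun x hx => hx.1.1⟩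
  have hAclosed : IsClosed A :=
    hθcont.preimage_isClosed_of_isClosed isClosed_Icc
      (isClosed_le continuous_const continuous_abs)
  set τ := sInf A with hτdef
  have hτA : τ ∈ A := hAclosed.csInf_mem hAne hAbdd
  have hτIcc : τ ∈ Set.Icc t₁ t₂ := hτA.1
  have ht₁τ : t₁ < τ := by
    rcases (le_csInf hAne fun x hx => hx.1.1 : t₁ ≤ τ).lt_or_eq with h | h
    · exact h
    · exact absurd hτA.2
        (by rw [show τ = t₁ from h.symm]; exact not_le.2 hθ₁)
  have hbefore : ∀ t ∈ Set.Ico t₁ τ, |θ t| < π / 2 := by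
    intro t htt
    by_contra h
    push_neg at h
    exact absurd (csInf_le hAbdd ⟨⟨htt.1, htt.2.le.trans hτIcc.2⟩, h⟩) (not_le.2 htt.2)
  -- tendsto from the left
  have hne : (nhdsWithin τ (Set.Iio τ)).NeBot := nhdsLT_neBot τ
  have hev : ∀ᶠ t in nhdsWithin τ (Set.Iio τ), t ∈ Set.Ico t₁ τ := by
    filter_upwards [nhdsWithin_le_nhds (Ioi_mem_nhds ht₁τ), self_mem_nhdsWithin]
      with t h1 h2
    exact ⟨le_of_lt h1, h2⟩
  have htendθ : Filter.Tendsto θ (nhdsWithin τ (Set.Iio τ)) (nhds (θ τ)) :=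
    ((hθderiv τ hτIcc).continuousAt).tendsto.comp
      (nhdsWithin_le_nhds)
  have hle : |θ τ| ≤ π / 2 := by
    refine le_of_tendsto htendθ.abs ?_
    filter_upwards [hev] with t htt using (hbefore t htt).le
  have habs : |θ τ| = π / 2 := le_antisymm hle hτA.2
  -- slope argument
  have hslope := hasDerivAt_iff_tendsto_slope.mp (hθderiv τ hτIcc)
  have hmono : nhdsWithin τ (Set.Iio τ) ≤ nhdsWithin τ {τ}ᶜ :=
    nhdsWithin_mono τ (fun x hx => ne_of_lt hx)
  have hslope' := hslope.mono_left hmono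
  have ha2 : 0 < a ^ 2 / (2 * m) := by positivity
  rcases abs_eq (by positivity : (0:ℝ) ≤ π / 2) |>.mp habs with hpos | hneg
  · -- θ τ = π/2 : derivative value is negative, but left slope is nonneg
    have hc : (a / (2 * m)) * (F (d τ) + G (b τ)) * cos (θ τ) ^ 2
        - (a ^ 2 / (2 * m)) * sin (θ τ) = -(a ^ 2 / (2 * m)) := by
      rw [hpos, Real.cos_pi_div_two, Real.sin_pi_div_two]; ring
    rw [hc] at hslope'
    have h0 : (0:ℝ) ≤ -(a ^ 2 / (2 * m)) := by
      refine ge_of_tendsto hslope' ?_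
      filter_upwards [hev, self_mem_nhdsWithin] with t htt hlt
      have h1 : θ t - θ τ < 0 := by
        have := hbefore t htt
        rw [hpos]
        linarith [le_abs_self (θ t)]
      have h2 : t - τ < 0 := sub_neg.mpr hlt
      have : 0 < (θ t - θ τ) / (t - τ) := div_pos_of_neg_of_neg h1 h2
      simpa [slope_def_field] using this.le
    linarith
  · -- θ τ = -π/2 : derivative value is positive, but left slope is nonpos
    have hc : (a / (2 * m)) * (F (d τ) + G (b τ)) * cos (θ τ) ^ 2
        - (a ^ 2 / (2 * m)) * sin (θ τ) = a ^ 2 / (2 * m) := by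
      rw [hneg]
      simp [Real.cos_pi_div_two, Real.sin_pi_div_two]
    rw [hc] at hslope'
    have h0 : a ^ 2 / (2 * m) ≤ 0 := by
      refine le_of_tendsto hslope' ?_
      filter_upwards [hev, self_mem_nhdsWithin] with t htt hlt
      have h1 : 0 < θ t - θ τ := by
        have := hbefore t htt
        rw [hneg]
        linarith [neg_abs_le (θ t)]
      have h2 : t - τ < 0 := sub_neg.mpr hlt
      have hq : (θ t - θ τ) / (t - τ) < 0 := div_neg_of_pos_of_neg h1 h2
      simpa [slope_def_field] using hq.le
    linarith
end

section
/- Let k > 0 and let θ : [t₀, t₁] → ℝ be a C¹ solution of θ'(t) = −k·sin(θ(t)) with θ(t) ∈ (0, π) for all t ∈ [t₀, t₁]. Then for all t ∈ [t₀, t₁]: csc(θ(t)) + cot(θ(t)) = (csc(θ(t₀)) + cot(θ(t₀)))·e^{k(t − t₀)}. -/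
/-!
Away from the zeros of `sin`, `(csc + cot)' = -(csc + cot) · csc`. Along a solution of
`θ' = -k sin θ` the factor `csc θ` cancels against `sin θ`, so `u = csc θ + cot θ` solves the
linear equation `u' = k u`, and `u(t) e^{-k (t - t₀)}` has zero derivative, hence is constant.
-/

open Real Set

noncomputable def cscAddCot (x : ℝ) : ℝ := 1 / sin x + cos x / sin x

theorem hasDerivAt_cscAddCot {x : ℝ} (hx : sin x ≠ 0) :
    HasDerivAt cscAddCot (-cscAddCot x / sin x) x := by
  have hnum : HasDerivAt (fun x => 1 + cos x) (-sin x) x := (hasDerivAt_cos x).const_add 1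
  have hquot := hnum.div (hasDerivAt_sin x) hx
  have hfun : (fun y => 1 + cos y) / sin = cscAddCot := by
    funext y
    rw [Pi.div_apply, cscAddCot, add_div]
  rw [hfun] at hquot
  refine hquot.congr_deriv ?_
  rw [cscAddCot]
  field_simp
  linear_combination -sin_sq_add_cos_sq x

theorem eq_mul_exp_of_hasDerivAt_mul_self {u : ℝ → ℝ} {k a b : ℝ}
    (hu : ∀ t ∈ Icc a b, HasDerivAt u (k * u t) t) :
    ∀ t ∈ Icc a b, u t = u a * exp (k * (t - a)) := by
  set g : ℝ → ℝ := fun t => u t * exp (-k * (t - a))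
  have hg : ∀ t ∈ Icc a b, HasDerivAt g 0 t := by
    intro t ht
    have hexp : HasDerivAt (fun t => exp (-k * (t - a))) (exp (-k * (t - a)) * (-k)) t := by
      simpa using ((hasDerivAt_id t).sub_const a).const_mul (-k) |>.exp
    exact ((hu t ht).mul hexp).congr_deriv (by ring)
  have hconst := constant_of_has_deriv_right_zero
    (fun t ht => (hg t ht).continuousAt.continuousWithinAt)
    (fun t ht => (hg t (Ico_subset_Icc_self ht)).hasDerivWithinAt)
  intro t ht
  have hga : g t = u a := by simpa [g] using hconst t ht
  calc u t = g t * exp (k * (t - a)) := by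
        rw [mul_assoc, ← exp_add, neg_mul, neg_add_cancel, exp_zero, mul_one]
    _ = u a * exp (k * (t - a)) := by rw [hga]

theorem csc_cot_exponential_growth_general
    (k t₀ t₁ : ℝ)
    (θ : ℝ → ℝ)
    (hran : ∀ t ∈ Set.Icc t₀ t₁, θ t ∈ Set.Ioo 0 π)
    (hode : ∀ t ∈ Set.Icc t₀ t₁, HasDerivAt θ (-k * sin (θ t)) t) :
    ∀ t ∈ Set.Icc t₀ t₁,
      1 / sin (θ t) + cos (θ t) / sin (θ t)
        = (1 / sin (θ t₀) + cos (θ t₀) / sin (θ t₀)) * exp (k * (t - t₀)) := by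
  refine eq_mul_exp_of_hasDerivAt_mul_self (u := cscAddCot ∘ θ) fun t ht => ?_
  have hsin : sin (θ t) ≠ 0 := (sin_pos_of_pos_of_lt_pi (hran t ht).1 (hran t ht).2).ne'
  refine ((hasDerivAt_cscAddCot hsin).comp t (hode t ht)).congr_deriv ?_
  simp only [Function.comp_apply]
  field_simp

/-- Explicit integration of `θ' = −k sin θ` by separation of variables: along a solution
taking values in `(0, π)`, the quantity `csc θ + cot θ` grows exponentially at rate `k`. -/
theorem csc_cot_exponential_growth
    (k t₀ t₁ : ℝ) (hk : 0 < k) (ht : t₀ ≤ t₁)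
    (θ : ℝ → ℝ)
    (hran : ∀ t ∈ Set.Icc t₀ t₁, θ t ∈ Set.Ioo 0 π)
    (hode : ∀ t ∈ Set.Icc t₀ t₁, HasDerivAt θ (-k * sin (θ t)) t) :
    ∀ t ∈ Set.Icc t₀ t₁,
      1 / sin (θ t) + cos (θ t) / sin (θ t)
        = (1 / sin (θ t₀) + cos (θ t₀) / sin (θ t₀)) * exp (k * (t - t₀)) :=
  csc_cot_exponential_growth_general k t₀ t₁ θ hran hode
end

section
/- Let k > 0, t₀ ∈ ℝ, and θ₀ ∈ (0, π/2). Let θ be the solution of θ'(t) = k·sin(θ(t)) with θ(t₀) = θ₀. Then θ(t) ∈ (0, π) for t in the maximal interval of existence, and θ(t₁) = π/2 at the finite time t₁ = t₀ + (1/k)·ln(csc(θ₀) + cot(θ₀)) > t₀. -/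
/-!
The equation `θ' = k sin θ` separates: `log tan (θ / 2)` grows with slope `k`, so the solution
through `θ₀` is `2 arctan (tan (θ₀ / 2) · e^{k (t - t₀)})`, which stays in `(0, π)`. Since
`k sin` is `|k|`-Lipschitz, every solution agrees with it. It equals `π / 2` once
`tan (θ₀ / 2) · e^{k (t - t₀)} = 1`, and `1 / tan (θ₀ / 2) = csc θ₀ + cot θ₀`.
-/

open Real Set

namespace Real

theorem sin_two_mul_arctan (x : ℝ) : sin (2 * arctan x) = 2 * x / (1 + x ^ 2) := by
  have h : 0 < 1 + x ^ 2 := by positivity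
  rw [sin_two_mul, sin_arctan, cos_arctan, mul_assoc, div_mul_div_comm, mul_one,
    mul_self_sqrt h.le, mul_div_assoc]

/-- Both sides are junk `0` where `sin x = 0`. -/
theorem one_add_cos_div_sin (x : ℝ) : (1 + cos x) / sin x = (tan (x / 2))⁻¹ := by
  obtain ⟨y, rfl⟩ : ∃ y, x = 2 * y := ⟨x / 2, by ring⟩
  rw [mul_div_cancel_left₀ y two_ne_zero, tan_eq_sin_div_cos, inv_div, sin_two_mul,
    cos_two_mul]
  rcases eq_or_ne (cos y) 0 with hc | hc
  · simp [hc]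
  · rw [show 1 + (2 * cos y ^ 2 - 1) = cos y * (2 * cos y) by ring,
      show 2 * sin y * cos y = sin y * (2 * cos y) by ring,
      mul_div_mul_right _ _ (mul_ne_zero two_ne_zero hc)]

theorem tan_div_two_pos {x : ℝ} (hx : x ∈ Ioo 0 π) : 0 < tan (x / 2) :=
  tan_pos_of_pos_of_lt_pi_div_two (by linarith [hx.1]) (by linarith [hx.2])

end Real

theorem eqOn_of_hasDerivAt_const_mul_sin {k a b : ℝ} {f g : ℝ → ℝ}
    (hf : ∀ t ∈ Icc a b, HasDerivAt f (k * sin (f t)) t)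
    (hg : ∀ t ∈ Icc a b, HasDerivAt g (k * sin (g t)) t) (ha : f a = g a) :
    EqOn f g (Icc a b) :=
  ODE_solution_unique (v := fun _ x => k * sin x)
    (fun _ => (lipschitzWith_smul k).comp lipschitzWith_sin)
    (fun t ht => (hf t ht).continuousAt.continuousWithinAt)
    (fun t ht => (hf t (Ico_subset_Icc_self ht)).hasDerivWithinAt)
    (fun t ht => (hg t ht).continuousAt.continuousWithinAt)
    (fun t ht => (hg t (Ico_subset_Icc_self ht)).hasDerivWithinAt) ha

theorem HasDerivAt.two_mul_arctan {k t : ℝ} {u : ℝ → ℝ} (hu : HasDerivAt u (k * u t) t) :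
    HasDerivAt (fun t => 2 * Real.arctan (u t)) (k * Real.sin (2 * Real.arctan (u t))) t := by
  have h : 0 < 1 + u t ^ 2 := by positivity
  refine (hu.arctan.const_mul 2).congr_deriv ?_
  rw [sin_two_mul_arctan]
  field_simp

noncomputable def sinFlow (k t₀ θ₀ t : ℝ) : ℝ :=
  2 * arctan (tan (θ₀ / 2) * exp (k * (t - t₀)))

namespace sinFlow

variable {k t₀ θ₀ : ℝ}

theorem hasDerivAt (t : ℝ) :
    HasDerivAt (sinFlow k t₀ θ₀) (k * sin (sinFlow k t₀ θ₀ t)) t :=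
  HasDerivAt.two_mul_arctan <|
    ((((hasDerivAt_id t).sub_const t₀).const_mul k).exp.const_mul (tan (θ₀ / 2))).congr_deriv
      (by simp only [id, mul_one]; ring)

theorem apply_self (hθ₀ : θ₀ ∈ Ioo (-π) π) : sinFlow k t₀ θ₀ t₀ = θ₀ := by
  rw [sinFlow, sub_self, mul_zero, exp_zero, mul_one,
    arctan_tan (by linarith [hθ₀.1]) (by linarith [hθ₀.2])]
  ring

theorem mem_Ioo (hθ₀ : θ₀ ∈ Ioo 0 π) (t : ℝ) : sinFlow k t₀ θ₀ t ∈ Ioo 0 π := by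
  have htan := tan_div_two_pos hθ₀
  have hpos := arctan_pos.2 (mul_pos htan (exp_pos (k * (t - t₀))))
  unfold sinFlow
  constructor <;> linarith [arctan_lt_pi_div_two (tan (θ₀ / 2) * exp (k * (t - t₀)))]

theorem apply_log_eq_pi_div_two (hk : k ≠ 0) (hθ₀ : θ₀ ∈ Ioo 0 π) :
    sinFlow k t₀ θ₀ (t₀ + (1 / k) * log (1 / sin θ₀ + cos θ₀ / sin θ₀)) = π / 2 := by
  have htan := tan_div_two_pos hθ₀
  rw [sinFlow, ← add_div, one_add_cos_div_sin, add_sub_cancel_left, ← mul_assoc,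
    mul_one_div_cancel hk, one_mul, exp_log (inv_pos.2 htan), mul_inv_cancel₀ htan.ne',
    arctan_one]
  ring

end sinFlow

/-- Instability for negative bare mass: a solution of `θ' = k sin θ` (`k = a²/(2|m|) > 0`)
starting at `θ₀ ∈ (0, π/2)` stays in `(0, π)` and reaches `π/2` at the finite time
`t₁ = t₀ + (1/k)·ln(csc θ₀ + cot θ₀)`. -/
theorem theta_reaches_pi_div_two
    (k t₀ θ₀ t₁ : ℝ) (hk : 0 < k) (hθ₀ : θ₀ ∈ Set.Ioo 0 (π / 2))
    (ht₁ : t₁ = t₀ + (1 / k) * Real.log (1 / sin θ₀ + cos θ₀ / sin θ₀))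
    (θ : ℝ → ℝ) (hinit : θ t₀ = θ₀)
    (hode : ∀ t ∈ Set.Icc t₀ t₁, HasDerivAt θ (k * sin (θ t)) t) :
    t₀ < t₁ ∧ (∀ t ∈ Set.Icc t₀ t₁, θ t ∈ Set.Ioo 0 π) ∧ θ t₁ = π / 2 := by
  have hθ₀π : θ₀ ∈ Ioo 0 π := ⟨hθ₀.1, hθ₀.2.trans (by linarith [pi_pos])⟩
  have hsin : 0 < sin θ₀ := sin_pos_of_mem_Ioo hθ₀π
  have hcos : 0 < cos θ₀ := cos_pos_of_mem_Ioo ⟨by linarith [pi_pos, hθ₀.1], hθ₀.2⟩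
  have hcsc_cot : 1 < 1 / sin θ₀ + cos θ₀ / sin θ₀ := by
    rw [← add_div, one_lt_div hsin]
    linarith [sin_le_one θ₀]
  have ht₀₁ : t₀ < t₁ := by
    rw [ht₁, lt_add_iff_pos_right]
    exact mul_pos (one_div_pos.2 hk) (log_pos hcsc_cot)
  have hθ : EqOn θ (sinFlow k t₀ θ₀) (Icc t₀ t₁) :=
    eqOn_of_hasDerivAt_const_mul_sin hode (fun t _ => sinFlow.hasDerivAt t)
      (by rw [hinit, sinFlow.apply_self ⟨by linarith [pi_pos, hθ₀.1], hθ₀π.2⟩])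
  refine ⟨ht₀₁, fun t ht => hθ ht ▸ sinFlow.mem_Ioo hθ₀π t, ?_⟩
  rw [hθ (right_mem_Icc.2 ht₀₁.le), ht₁, sinFlow.apply_log_eq_pi_div_two hk.ne' hθ₀π]
end

section
/- Let a > 0 and m < 0 be real constants and for β ∈ ℝ define G_β(x) = β·sin(πx)·χ_{[−3,−1]}(x). Consider the system b'(t) = sin(θ(t)) − 1, θ'(t) = −(a/(2|m|))·G_β(b(t))·cos²(θ(t)) + (a²/(2|m|))·sin(θ(t)) with initial conditions b(t₁) = −1, θ(t₁) = 0. Then there exists ε > 0 such that for all β with 0 < β < ε, the solution (b(t), θ(t)) satisfies: there exists t₂ > t₁ with b(t₂) = −3 and θ(t₂) < 0. -/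
open Real Set Filter Topology

/-!
Up to time `t₁ + 4`, Grönwall's inequality keeps `|θ| ≤ δ = O(β)`, so `b(t) = -1 - (t - t₁) + O(δ)`
and the particle leaves the pulse at a time `t₂` with `t₂ - t₁ = 2 + O(δ)`. With `c = a/(2|m|)`
and `k = a²/(2|m|)`, the integrating factor `e^{-k(t-t₁)}` turns `θ' = kθ + F` into
`e^{-k(t₂-t₁)} θ(t₂) = ∫ e^{-k(s-t₁)} F(s) ds` with `F(s) = -cβ sin(π(s-t₁)) + O(βδ + δ³)`.
The decreasing weight favours the first half of the pulse, which pushes `θ` down: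
`∫₀² e^{-kx} sin(πx) dx = π(1 - e^{-2k})/(k² + π²) > 0`, hence `θ(t₂) < 0` for small `β`.
The integral is never formed: the estimate is a monotonicity argument against the explicit
antiderivative `pulseResponse` of `e^{-kx} sin(πx)`.
-/

noncomputable def pulse (β x : ℝ) : ℝ := if x ∈ Icc (-3 : ℝ) (-1) then β * sin (π * x) else 0

lemma abs_pulse_le {β : ℝ} (hβ : 0 ≤ β) (x : ℝ) : |pulse β x| ≤ β := by
  unfold pulse
  split_ifs
  · rw [abs_mul, abs_of_nonneg hβ]
    exact mul_le_of_le_one_right hβ (abs_sin_le_one _)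
  · simpa using hβ

lemma abs_forcing_le {c k g y β : ℝ} (hc : 0 ≤ c) (hk : 0 ≤ k) (hg : |g| ≤ β) :
    |-c * g * cos y ^ 2 + k * sin y| ≤ k * |y| + c * β := by
  have hcos : cos y ^ 2 ≤ 1 := cos_sq_le_one y
  calc |-c * g * cos y ^ 2 + k * sin y| ≤ c * |g| * cos y ^ 2 + k * |sin y| := by
        refine (abs_add_le _ _).trans_eq ?_
        simp only [abs_mul, abs_neg, abs_pow, sq_abs, abs_of_nonneg hc, abs_of_nonneg hk]
    _ ≤ c * β * 1 + k * |y| :=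
        add_le_add (mul_le_mul (mul_le_mul_of_nonneg_left hg hc) hcos (sq_nonneg _)
          (mul_nonneg hc ((abs_nonneg g).trans hg))) (mul_le_mul_of_nonneg_left abs_sin_le_abs hk)
    _ = k * |y| + c * β := by ring

/-- Read with `x = b t`, `y = θ t`, `z = t - t₁`: along `b ≈ -1 - (t - t₁)` the forcing
`θ' - kθ` is `-cβ sin (π (t - t₁))` up to `O(βδ² + βη + δ³)`. -/
lemma abs_forcing_add_sin_le {c β k x y z δ η : ℝ} (hc : 0 ≤ c) (hβ : 0 ≤ β) (hk : 0 ≤ k)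
    (hy : |y| ≤ δ) (hxz : |x + 1 + z| ≤ η) :
    |-c * (β * sin (π * x)) * cos y ^ 2 + k * sin y - k * y + c * β * sin (π * z)|
      ≤ c * β * (δ ^ 2 + π * η) + k * (δ ^ 3 / 6) := by
  have hz : sin (π * z) = sin (π * (-1 - z)) := by
    rw [show π * (-1 - z) = -(π * z + π) by ring, sin_neg, sin_add_pi, neg_neg]
  have hsq : |sin (π * x) * sin y ^ 2| ≤ δ ^ 2 := by
    rw [abs_mul, abs_pow]
    calc |sin (π * x)| * |sin y| ^ 2 ≤ 1 * |y| ^ 2 :=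
          mul_le_mul (abs_sin_le_one _) (pow_le_pow_left₀ (abs_nonneg _) abs_sin_le_abs 2)
            (by positivity) zero_le_one
      _ ≤ δ ^ 2 := by rw [one_mul]; exact pow_le_pow_left₀ (abs_nonneg y) hy 2
  have hlip : |sin (π * (-1 - z)) - sin (π * x)| ≤ π * η := by
    refine (abs_sin_sub_sin_le _ _).trans ?_
    rw [show π * (-1 - z) - π * x = -(π * (x + 1 + z)) by ring, abs_neg, abs_mul,
      abs_of_pos pi_pos]
    exact mul_le_mul_of_nonneg_left hxz pi_pos.le
  have hcube : |sin y - y| ≤ δ ^ 3 / 6 := by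
    rw [abs_sub_comm]
    exact (abs_sub_sin_le y).trans (by gcongr)
  have hsplit : -c * (β * sin (π * x)) * cos y ^ 2 + k * sin y - k * y + c * β * sin (π * z)
      = c * β * (sin (π * x) * sin y ^ 2 + (sin (π * (-1 - z)) - sin (π * x)))
        + k * (sin y - y) := by
    rw [hz, cos_sq']; ring
  rw [hsplit]
  calc _ ≤ c * β * (|sin (π * x) * sin y ^ 2| + |sin (π * (-1 - z)) - sin (π * x)|)
        + k * |sin y - y| := by
        refine (abs_add_le _ _).trans (add_le_add ?_ ?_)
        · rw [abs_mul, abs_of_nonneg (mul_nonneg hc hβ)]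
          exact mul_le_mul_of_nonneg_left (abs_add_le _ _) (mul_nonneg hc hβ)
        · rw [abs_mul, abs_of_nonneg hk]
    _ ≤ c * β * (δ ^ 2 + π * η) + k * (δ ^ 3 / 6) := by gcongr

noncomputable def pulseResponse (k x : ℝ) : ℝ :=
  exp (-k * x) * (-(k * sin (π * x)) - π * cos (π * x)) / (k ^ 2 + π ^ 2)

lemma hasDerivAt_pulseResponse (k x : ℝ) :
    HasDerivAt (pulseResponse k) (exp (-k * x) * sin (π * x)) x := by
  have hlin : HasDerivAt (fun x : ℝ => π * x) π x := by simpa using (hasDerivAt_id x).const_mul π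
  have hexp : HasDerivAt (fun x : ℝ => exp (-k * x)) (exp (-k * x) * -k) x := by
    simpa using ((hasDerivAt_id x).const_mul (-k)).exp
  have hnum : HasDerivAt (fun x => exp (-k * x) * (-(k * sin (π * x)) - π * cos (π * x)))
      (exp (-k * x) * -k * (-(k * sin (π * x)) - π * cos (π * x))
        + exp (-k * x) * (-(k * (cos (π * x) * π)) - π * (-sin (π * x) * π))) x :=
    hexp.mul ((hlin.sin.const_mul k).neg.sub (hlin.cos.const_mul π))
  refine (hnum.div_const (k ^ 2 + π ^ 2)).congr_deriv ?_
  field_simp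
  ring

lemma pulseResponse_two_sub_zero (k : ℝ) :
    pulseResponse k 2 - pulseResponse k 0 = π * (1 - exp (-(2 * k))) / (k ^ 2 + π ^ 2) := by
  simp only [pulseResponse, mul_zero, exp_zero, sin_zero, cos_zero, mul_comm π 2, sin_two_pi,
    cos_two_pi]
  ring_nf

lemma pulseResponse_two_sub_zero_pos {k : ℝ} (hk : 0 < k) :
    0 < pulseResponse k 2 - pulseResponse k 0 := by
  have hexp : 0 < 1 - exp (-(2 * k)) := sub_pos.2 (exp_lt_one_iff.2 (by linarith))
  rw [pulseResponse_two_sub_zero]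
  have := pi_pos
  positivity

lemma abs_pulseResponse_sub_le {k x y : ℝ} (hk : 0 ≤ k) (hx : 0 ≤ x) (hy : 0 ≤ y) :
    |pulseResponse k x - pulseResponse k y| ≤ |x - y| := by
  have h := (convex_Ici (0 : ℝ)).norm_image_sub_le_of_norm_hasDerivWithin_le (C := 1)
    (fun z _ => (hasDerivAt_pulseResponse k z).hasDerivWithinAt) (fun z (hz : 0 ≤ z) => ?_) hy hx
  · simpa using h
  rw [norm_mul, Real.norm_eq_abs, abs_of_pos (exp_pos _), ← one_mul (1 : ℝ)]
  exact mul_le_mul (exp_le_one_iff.2 (by nlinarith)) (by simpa using abs_sin_le_one (π * z))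
    (norm_nonneg _) zero_le_one

/-- Integrating factor: `(e^{-k(t-t₁)} θ)' = e^{-k(t-t₁)} (θ' - kθ)`. -/
theorem exp_mul_sub_le_of_hasDerivAt {k t₁ t₂ : ℝ} {θ θ' Φ φ : ℝ → ℝ} (h : t₁ ≤ t₂)
    (hθ : ∀ t ∈ Icc t₁ t₂, HasDerivAt θ (θ' t) t) (hΦ : ∀ t ∈ Icc t₁ t₂, HasDerivAt Φ (φ t) t)
    (hle : ∀ t ∈ Ioo t₁ t₂, exp (-k * (t - t₁)) * (θ' t - k * θ t) ≤ φ t) :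
    exp (-k * (t₂ - t₁)) * θ t₂ - θ t₁ ≤ Φ t₂ - Φ t₁ := by
  have hu : ∀ t ∈ Icc t₁ t₂, HasDerivAt (fun s => exp (-k * (s - t₁)) * θ s - Φ s)
      (exp (-k * (t - t₁)) * (θ' t - k * θ t) - φ t) t := fun t ht => by
    have hw : HasDerivAt (fun s => exp (-k * (s - t₁))) (exp (-k * (t - t₁)) * -k) t := by
      simpa using (((hasDerivAt_id t).sub_const t₁).const_mul (-k)).exp
    exact ((hw.mul (hθ t ht)).sub (hΦ t ht)).congr_deriv (by ring)
  have hanti : AntitoneOn (fun s => exp (-k * (s - t₁)) * θ s - Φ s) (Icc t₁ t₂) :=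
    antitoneOn_of_hasDerivWithinAt_nonpos (convex_Icc _ _)
      (fun t ht => (hu t ht).continuousAt.continuousWithinAt)
      (fun t ht => (hu t (interior_subset ht)).hasDerivWithinAt)
      (fun t ht => sub_nonpos.2 (hle t (by rwa [interior_Icc] at ht)))
  have := hanti (left_mem_Icc.2 h) (right_mem_Icc.2 h) h
  simp only [sub_self, mul_zero, exp_zero, one_mul] at this
  linarith

theorem exists_exit_time {b : ℝ → ℝ} {t₁ δ : ℝ} (hcont : ContinuousOn b (Icc t₁ (t₁ + 4)))
    (hanti : AntitoneOn b (Icc t₁ (t₁ + 4))) (hb : b t₁ = -1) (hδ : δ < 1 / 2)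
    (hdrift : ∀ t ∈ Icc t₁ (t₁ + 4), |b t + 1 + (t - t₁)| ≤ δ * (t - t₁)) :
    ∃ t₂ ∈ Ioc t₁ (t₁ + 4), b t₂ = -3 ∧ MapsTo b (Icc t₁ t₂) (Icc (-3) (-1)) := by
  have h4 : t₁ ≤ t₁ + 4 := by linarith
  have hend : b (t₁ + 4) < -3 := by
    have := (abs_le.1 (hdrift (t₁ + 4) (right_mem_Icc.2 h4))).2
    rw [add_sub_cancel_left] at this
    linarith
  obtain ⟨t₂, ht₂, hb₂⟩ := intermediate_value_Icc' h4 hcont ⟨hend.le, by rw [hb]; norm_num⟩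
  have ht₁₂ : t₁ < t₂ := ht₂.1.lt_of_ne (by rintro rfl; linarith)
  refine ⟨t₂, ⟨ht₁₂, ht₂.2⟩, hb₂, fun t ht => ⟨?_, ?_⟩⟩
  · exact hb₂ ▸ hanti ⟨ht.1, ht.2.trans ht₂.2⟩ ht₂ ht.2
  · exact hb ▸ hanti (left_mem_Icc.2 h4) ⟨ht.1, ht.2.trans ht₂.2⟩ ht.1

def SolvesPulseSystem (c k β t₁ : ℝ) (b θ : ℝ → ℝ) : Prop :=
  ∀ t ∈ Ici t₁, HasDerivAt b (sin (θ t) - 1) t ∧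
    HasDerivAt θ (-c * pulse β (b t) * cos (θ t) ^ 2 + k * sin (θ t)) t

namespace SolvesPulseSystem

variable {c k β t₁ : ℝ} {b θ : ℝ → ℝ}

theorem abs_theta_le (hsol : SolvesPulseSystem c k β t₁ b θ) (hc : 0 ≤ c) (hk : 0 < k)
    (hβ : 0 ≤ β) (hθ : θ t₁ = 0) (L : ℝ) :
    ∀ t ∈ Icc t₁ (t₁ + L), |θ t| ≤ c / k * (exp (k * L) - 1) * β := by
  intro t ht
  have hgr := norm_le_gronwallBound_of_norm_deriv_right_le (δ := 0) (K := k) (ε := c * β)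
    (fun s hs => (hsol s hs.1).2.continuousAt.continuousWithinAt)
    (fun s hs => (hsol s hs.1).2.hasDerivWithinAt) (by simp [hθ])
    (fun s _ => abs_forcing_le hc hk.le (abs_pulse_le hβ _)) t ht
  have hexp : exp (k * (t - t₁)) ≤ exp (k * L) :=
    exp_le_exp.2 (mul_le_mul_of_nonneg_left (by linarith [ht.2]) hk.le)
  calc |θ t| ≤ c / k * (exp (k * (t - t₁)) - 1) * β := by
        simpa [gronwallBound_of_K_ne_0 hk.ne', div_mul_eq_mul_div, mul_right_comm] using hgr
    _ ≤ c / k * (exp (k * L) - 1) * β := by gcongr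

theorem antitoneOn (hsol : SolvesPulseSystem c k β t₁ b θ) : AntitoneOn b (Ici t₁) :=
  antitoneOn_of_hasDerivWithinAt_nonpos (convex_Ici _)
    (fun t ht => (hsol t ht).1.continuousAt.continuousWithinAt)
    (fun t ht => (hsol t (interior_subset ht)).1.hasDerivWithinAt)
    (fun _ _ => sub_nonpos.2 (sin_le_one _))

theorem abs_drift_le (hsol : SolvesPulseSystem c k β t₁ b θ) (hb : b t₁ = -1) {T δ : ℝ}
    (hθ : ∀ t ∈ Icc t₁ T, |θ t| ≤ δ) :
    ∀ t ∈ Icc t₁ T, |b t + 1 + (t - t₁)| ≤ δ * (t - t₁) := by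
  intro t ht
  have h := norm_image_sub_le_of_norm_deriv_le_segment' (f := fun s => b s + s)
    (fun s hs => (((hsol s hs.1).1.add (hasDerivAt_id s)).hasDerivWithinAt).congr_deriv
      (sub_add_cancel _ _))
    (fun s hs => (abs_sin_le_abs).trans (hθ s (Ico_subset_Icc_self hs))) t ht
  rwa [Real.norm_eq_abs, hb, show b t + t - (-1 + t₁) = b t + 1 + (t - t₁) by ring] at h

theorem exp_mul_theta_le (hsol : SolvesPulseSystem c k β t₁ b θ) (hc : 0 ≤ c) (hk : 0 ≤ k)
    (hβ : 0 ≤ β) (hθ₀ : θ t₁ = 0) {t₂ δ η : ℝ} (h : t₁ ≤ t₂)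
    (hmaps : MapsTo b (Icc t₁ t₂) (Icc (-3) (-1))) (hθ : ∀ t ∈ Icc t₁ t₂, |θ t| ≤ δ)
    (hdrift : ∀ t ∈ Icc t₁ t₂, |b t + 1 + (t - t₁)| ≤ η) :
    exp (-k * (t₂ - t₁)) * θ t₂ ≤ -(c * β) * (pulseResponse k (t₂ - t₁) - pulseResponse k 0)
      + (c * β * (δ ^ 2 + π * η) + k * (δ ^ 3 / 6)) * (t₂ - t₁) := by
  set E := c * β * (δ ^ 2 + π * η) + k * (δ ^ 3 / 6)
  have hΦ : ∀ t, HasDerivAt (fun s => -(c * β) * pulseResponse k (s - t₁) + E * (s - t₁))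
      (-(c * β) * (exp (-k * (t - t₁)) * sin (π * (t - t₁))) + E * 1) t := fun t =>
    (((hasDerivAt_pulseResponse k (t - t₁)).comp_sub_const t t₁).const_mul _).add
      (((hasDerivAt_id t).sub_const t₁).const_mul E)
  have hpt : ∀ t ∈ Ioo t₁ t₂, exp (-k * (t - t₁)) *
      (-c * pulse β (b t) * cos (θ t) ^ 2 + k * sin (θ t) - k * θ t)
        ≤ -(c * β) * (exp (-k * (t - t₁)) * sin (π * (t - t₁))) + E * 1 := by
    intro t ht
    have hX := abs_forcing_add_sin_le hc hβ hk (hθ t (Ioo_subset_Icc_self ht))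
      (hdrift t (Ioo_subset_Icc_self ht)) (z := t - t₁)
    have hw : exp (-k * (t - t₁)) ≤ 1 :=
      exp_le_one_iff.2 (by nlinarith [ht.1])
    have hwX := (mul_le_mul_of_nonneg_left ((le_abs_self _).trans hX) (exp_pos _).le).trans
      (mul_le_of_le_one_left ((abs_nonneg _).trans hX) hw)
    rw [pulse, if_pos (hmaps (Ioo_subset_Icc_self ht))]
    linear_combination hwX
  have := exp_mul_sub_le_of_hasDerivAt h (fun t ht => (hsol t ht.1).2) (fun t _ => hΦ t) hpt
  simp only [hθ₀, sub_self, mul_zero, add_zero] at this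
  linarith

theorem exists_exit_theta_neg (hsol : SolvesPulseSystem c k β t₁ b θ) (hc : 0 ≤ c) (hk : 0 < k)
    (hβ : 0 ≤ β) (hb : b t₁ = -1) (hθ₀ : θ t₁ = 0) {δ : ℝ}
    (hθ : ∀ t ∈ Icc t₁ (t₁ + 4), |θ t| ≤ δ) (hδ : δ < 1 / 2)
    (hgain : 4 * (c * β * δ + (c * β * (δ ^ 2 + π * (4 * δ)) + k * (δ ^ 3 / 6)))
      < c * β * (pulseResponse k 2 - pulseResponse k 0)) :
    ∃ t₂ > t₁, b t₂ = -3 ∧ θ t₂ < 0 := by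
  have hδ₀ : 0 ≤ δ := by simpa [hθ₀] using hθ t₁ (left_mem_Icc.2 (by linarith))
  have hdrift := hsol.abs_drift_le hb hθ
  obtain ⟨t₂, ⟨ht₁₂, ht₂⟩, hb₂, hmaps⟩ := exists_exit_time
    (fun t ht => (hsol t ht.1).1.continuousAt.continuousWithinAt)
    (hsol.antitoneOn.mono Icc_subset_Ici_self) hb hδ hdrift
  have hsub : Icc t₁ t₂ ⊆ Icc t₁ (t₁ + 4) := Icc_subset_Icc_right ht₂
  have hcross : |t₂ - t₁ - 2| ≤ 4 * δ := by
    have := hdrift t₂ (hsub (right_mem_Icc.2 ht₁₂.le))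
    rw [hb₂, show -3 + 1 + (t₂ - t₁) = t₂ - t₁ - 2 by ring] at this
    nlinarith
  have hθ₂ := hsol.exp_mul_theta_le hc hk.le hβ hθ₀ ht₁₂.le hmaps (fun t ht => hθ t (hsub ht))
    (η := 4 * δ) fun t ht => (hdrift t (hsub ht)).trans (by nlinarith [ht.2])
  have hΨ := (abs_le.1 ((abs_pulseResponse_sub_le hk.le (sub_nonneg.2 ht₁₂.le) zero_le_two).trans
    hcross)).1
  have hE : 0 ≤ c * β * (δ ^ 2 + π * (4 * δ)) + k * (δ ^ 3 / 6) := by positivity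
  refine ⟨t₂, ht₁₂, hb₂, neg_of_mul_neg_right (hθ₂.trans_lt ?_) (exp_pos _).le⟩
  nlinarith [mul_le_mul_of_nonneg_left hΨ (mul_nonneg hc hβ),
    mul_le_mul_of_nonneg_left (show t₂ - t₁ ≤ 4 by linarith) hE]

end SolvesPulseSystem

theorem exists_pos_error_lt_gain (c k C J : ℝ) (hJ : 0 < c * J) :
    ∃ ε > 0, ∀ β, 0 < β → β < ε → C * β < 1 / 2 ∧
      4 * (c * β * (C * β) + (c * β * ((C * β) ^ 2 + π * (4 * (C * β))) + k * ((C * β) ^ 3 / 6)))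
        < c * β * J := by
  set f : ℝ → ℝ := fun β =>
    4 * (c * (C * β) + (c * ((C * β) ^ 2 + π * (4 * (C * β))) + k * (C ^ 3 * β ^ 2 / 6)))
  have hδ : ∀ᶠ β in 𝓝 0, C * β < 1 / 2 :=
    ((continuous_const.mul continuous_id).tendsto' 0 0 (by simp)).eventually_lt_const
      (by norm_num)
  have hf : ∀ᶠ β in 𝓝 0, f β < c * J :=
    ((by fun_prop : Continuous f).tendsto' 0 0 (by simp [f])).eventually_lt_const hJ
  obtain ⟨ε, hε, hball⟩ := Metric.eventually_nhds_iff.1 (hδ.and hf)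
  refine ⟨ε, hε, fun β hβ hβε => ?_⟩
  obtain ⟨hCβ, hfβ⟩ := hball (y := β) (by rwa [dist_zero_right, norm_of_nonneg hβ.le])
  exact ⟨hCβ, by linear_combination mul_lt_mul_of_pos_left hfβ hβ⟩

/-- A particle of charge `a > 0` and negative bare mass `m < 0` struck by a small
incoming radiation pulse `G_β(x) = β sin(πx) χ_{[−3,−1]}(x)`: for all sufficiently small
`β > 0`, the solution of `b' = sin θ − 1`,
`θ' = −(a/(2|m|)) G_β(b) cos²θ + (a²/(2|m|)) sin θ` with `b(t₁) = −1`, `θ(t₁) = 0`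
exits the pulse with strictly negative `θ`: there is `t₂ > t₁` with `b(t₂) = −3` and
`θ(t₂) < 0`. -/
theorem particle_exits_pulse_with_negative_theta
    (a m t₁ : ℝ) (ha : 0 < a) (hm : m < 0) :
    ∃ ε > (0 : ℝ), ∀ β : ℝ, 0 < β → β < ε →
      ∀ b θ : ℝ → ℝ,
        b t₁ = -1 → θ t₁ = 0 →
        (∀ t ∈ Set.Ici t₁,
          HasDerivAt b (sin (θ t) - 1) t ∧
          HasDerivAt θ
            (-(a / (2 * |m|)) *
                (if b t ∈ Set.Icc (-3 : ℝ) (-1) then β * sin (π * b t) else 0) *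
                cos (θ t) ^ 2
              + (a ^ 2 / (2 * |m|)) * sin (θ t)) t) →
        ∃ t₂ > t₁, b t₂ = -3 ∧ θ t₂ < 0 := by
  have hm' : 0 < |m| := abs_pos.2 hm.ne
  set c := a / (2 * |m|)
  set k := a ^ 2 / (2 * |m|)
  have hc : 0 < c := by positivity
  have hk : 0 < k := by positivity
  obtain ⟨ε, hε, hsmall⟩ := exists_pos_error_lt_gain c k (c / k * (exp (k * 4) - 1))
    (pulseResponse k 2 - pulseResponse k 0) (mul_pos hc (pulseResponse_two_sub_zero_pos hk))
  refine ⟨ε, hε, fun β hβ hβε b θ hb hθ hsol => ?_⟩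
  obtain ⟨hδ, hgain⟩ := hsmall β hβ hβε
  exact SolvesPulseSystem.exists_exit_theta_neg hsol hc.le hk hβ.le hb hθ
    (SolvesPulseSystem.abs_theta_le hsol hc.le hk hβ.le hθ 4) hδ hgain
end

section
/- Let a > 0 and m < 0 be real constants. For β ∈ ℝ, let y_β : [−1, 1] → ℝ be a C¹ solution of dy/dx = (a/(2|m|))·(1 + sin(y))·(β·sin(πx) − a·sec(y)·tan(y)) with y_β(−1) = 0. Then there exists ε > 0 such that for all β with 0 < β < ε, one has y_β(1) > 0. -/
/-!
For `|u| ≤ 1/2`, `(1 + sin u) sec u tan u = sin u / (1 - sin u) = u + O(u²)`, so with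
`c = a / (2|m|)` and `k = a c` the equation reads `y' = c β sin (π x) - k y + O(β |y| + y²)`.
A barrier argument gives the a priori bound `|y| ≤ M β`, which for small `β` also keeps `y` in
the region `|y| ≤ 1/2` where this expansion is valid. Then
`(e^{k x} y)' ≥ c β e^{k x} sin (π x) - O(β²)`, so
`e^k y(1) ≥ c β ∫_{-1}^{1} e^{k x} sin (π x) dx - O(β²)`, and the integral is
`2 π sinh k / (k² + π²) > 0`.
-/

open Real Set

theorem one_add_sin_mul_one_div_cos_mul_tan {u : ℝ} (hu : cos u ≠ 0) :
    (1 + sin u) * (1 / cos u) * tan u = sin u / (1 - sin u) := by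
  have hs : 1 - sin u ≠ 0 := by
    intro h
    have := sin_sq_add_cos_sq u
    have : cos u ^ 2 = 0 := by nlinarith
    exact hu (pow_eq_zero_iff two_ne_zero |>.1 this)
  rw [tan_eq_sin_div_cos]
  field_simp
  linear_combination (-sin u) * sin_sq_add_cos_sq u

theorem cos_pos_of_abs_le_half {u : ℝ} (hu : |u| ≤ 1 / 2) : 0 < cos u := by
  obtain ⟨h₁, h₂⟩ := abs_le.1 hu
  exact cos_pos_of_mem_Ioo ⟨by linarith [pi_gt_three], by linarith [pi_gt_three]⟩

theorem half_le_one_sub_sin {u : ℝ} (hu : |u| ≤ 1 / 2) : 1 / 2 ≤ 1 - sin u := by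
  linarith [(le_abs_self (sin u)).trans (abs_sin_le_abs.trans hu)]

theorem abs_sin_div_one_sub_sin_le {u : ℝ} (hu : |u| ≤ 1 / 2) :
    |sin u / (1 - sin u)| ≤ 2 * |u| := by
  have h := half_le_one_sub_sin hu
  rw [abs_div, abs_of_pos (show (0 : ℝ) < 1 - sin u by linarith), div_le_iff₀ (by linarith)]
  nlinarith [abs_sin_le_abs (x := u), abs_nonneg u]

theorem abs_sub_sin_div_one_sub_sin_le {u : ℝ} (hu : |u| ≤ 1 / 2) :
    |u - sin u / (1 - sin u)| ≤ 4 * u ^ 2 := by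
  have h := half_le_one_sub_sin hu
  have hsub : |u - sin u| ≤ u ^ 2 := by
    nlinarith [Real.abs_sub_sin_le u, abs_nonneg u, sq_abs u]
  have hprod : |u * sin u| ≤ u ^ 2 := by
    rw [abs_mul, ← sq_abs u, sq]
    exact mul_le_mul_of_nonneg_left abs_sin_le_abs (abs_nonneg u)
  rw [show u - sin u / (1 - sin u) = (u - sin u - u * sin u) / (1 - sin u) by
      field_simp; ring,
    abs_div, abs_of_pos (show (0 : ℝ) < 1 - sin u by linarith), div_le_iff₀ (by linarith)]
  nlinarith [abs_sub (u - sin u) (u * sin u), sq_nonneg u]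

theorem abs_le_of_abs_deriv_le_mul_abs_add {f f' : ℝ → ℝ} {a b K ε R : ℝ} (hK : 0 < K)
    (hε : 0 < ε) (hf : ∀ x ∈ Icc a b, HasDerivAt f (f' x) x) (ha : |f a| ≤ ε / K)
    (hR : ε / K * exp (3 * K * (b - a)) ≤ R)
    (bound : ∀ x ∈ Icc a b, |f x| ≤ R → |f' x| ≤ K * |f x| + ε) :
    ∀ x ∈ Icc a b, |f x| ≤ ε / K * exp (3 * K * (b - a)) := by
  set B : ℝ → ℝ := fun x ↦ ε / K * exp (3 * K * (x - a))
  have hB : ∀ x, HasDerivAt B (3 * ε * exp (3 * K * (x - a))) x := fun x ↦ by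
    refine ((((hasDerivAt_id x).sub_const a).const_mul (3 * K)).exp.const_mul
      (ε / K)).congr_deriv ?_
    simp only [id]
    field_simp
  have hB_le : ∀ x ∈ Icc a b, B x ≤ ε / K * exp (3 * K * (b - a)) := fun x hx ↦ by
    have := hx.2
    simp only [B]
    gcongr
  -- Where `|f|` touches the barrier `B ≤ R`, `bound` applies; the rate `3 K` makes `B` steeper.
  have hfB : ∀ x ∈ Icc a b, |f x| ≤ B x := by
    refine image_norm_le_of_norm_deriv_right_lt_deriv_boundary'
      (fun x hx ↦ (hf x hx).continuousAt.continuousWithinAt)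
      (fun x hx ↦ (hf x (Ico_subset_Icc_self hx)).hasDerivWithinAt) (by simpa [B] using ha)
      (fun x _ ↦ (hB x).continuousAt.continuousWithinAt) (fun x _ ↦ (hB x).hasDerivWithinAt) ?_
    intro x hx hfx
    rw [Real.norm_eq_abs] at hfx
    have hx' := Ico_subset_Icc_self hx
    have hE : 1 ≤ exp (3 * K * (x - a)) := one_le_exp (by nlinarith [hx.1])
    calc ‖f' x‖ ≤ K * B x + ε := hfx ▸ bound x hx' (hfx ▸ (hB_le x hx').trans hR)
      _ = ε * exp (3 * K * (x - a)) + ε := by simp only [B]; field_simp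
      _ < 3 * ε * exp (3 * K * (x - a)) := by nlinarith
  exact fun x hx ↦ (hfB x hx).trans (hB_le x hx)

noncomputable def backwardFlowField (a c β x u : ℝ) : ℝ :=
  c * (1 + sin u) * (β * sin (π * x) - a * (1 / cos u) * tan u)

theorem backwardFlowField_eq {a c β x u : ℝ} (hu : cos u ≠ 0) :
    backwardFlowField a c β x u =
      c * β * (1 + sin u) * sin (π * x) - a * c * (sin u / (1 - sin u)) := by
  rw [backwardFlowField, ← one_add_sin_mul_one_div_cos_mul_tan hu]
  ring

theorem abs_backwardFlowField_le {a c β x u : ℝ} (ha : 0 ≤ a) (hc : 0 ≤ c) (hβ : 0 ≤ β)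
    (hu : |u| ≤ 1 / 2) :
    |backwardFlowField a c β x u| ≤ 2 * (a * c) * |u| + 2 * c * β := by
  rw [backwardFlowField_eq (cos_pos_of_abs_le_half hu).ne']
  have hforce : |c * β * (1 + sin u) * sin (π * x)| ≤ 2 * c * β := by
    rw [abs_mul, abs_mul, abs_of_nonneg (by positivity : 0 ≤ c * β),
      abs_of_nonneg (by linarith [neg_one_le_sin u] : 0 ≤ 1 + sin u)]
    have h : (1 + sin u) * |sin (π * x)| ≤ 2 := by
      nlinarith [sin_le_one u, abs_sin_le_one (π * x), abs_nonneg (sin (π * x))]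
    nlinarith [mul_nonneg hc hβ]
  have hdamp : |a * c * (sin u / (1 - sin u))| ≤ 2 * (a * c) * |u| := by
    rw [abs_mul, abs_of_nonneg (by positivity : 0 ≤ a * c)]
    nlinarith [abs_sin_div_one_sub_sin_le hu, mul_nonneg ha hc]
  linarith [abs_sub (c * β * (1 + sin u) * sin (π * x)) (a * c * (sin u / (1 - sin u)))]

theorem sub_le_backwardFlowField_add {a c β x u δ : ℝ} (ha : 0 ≤ a) (hc : 0 ≤ c)
    (hβ : 0 ≤ β) (hu : |u| ≤ δ) (hδ : δ ≤ 1 / 2) :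
    c * β * sin (π * x) - (c * β * δ + 4 * (a * c) * δ ^ 2) ≤
      backwardFlowField a c β x u + a * c * u := by
  have hu' := hu.trans hδ
  rw [backwardFlowField_eq (cos_pos_of_abs_le_half hu').ne']
  have hforce : -(c * β * δ) ≤ c * β * sin u * sin (π * x) := by
    have h : |sin u * sin (π * x)| ≤ δ := by
      rw [abs_mul]
      exact (mul_le_of_le_one_right (abs_nonneg _) (abs_sin_le_one _)).trans
        (abs_sin_le_abs.trans hu)
    nlinarith [(abs_le.1 h).1, mul_nonneg hc hβ]
  have hdamp : -(4 * (a * c) * δ ^ 2) ≤ a * c * (u - sin u / (1 - sin u)) := by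
    have h := (abs_le.1 (abs_sub_sin_div_one_sub_sin_le hu')).1
    have hsq : u ^ 2 ≤ δ ^ 2 := sq_le_sq' (abs_le.1 hu).1 (abs_le.1 hu).2
    nlinarith [mul_nonneg ha hc]
  linarith

theorem hasDerivAt_primitive_exp_mul_sin (k x : ℝ) :
    HasDerivAt (fun x ↦ exp (k * x) * (k * sin (π * x) - π * cos (π * x)) / (k ^ 2 + π ^ 2))
      (exp (k * x) * sin (π * x)) x := by
  have hlin : ∀ r : ℝ, HasDerivAt (fun x ↦ r * x) r x := fun r ↦ by
    simpa using (hasDerivAt_id x).const_mul r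
  refine (((hlin k).exp.mul (((hlin π).sin.const_mul k).fun_sub
    ((hlin π).cos.const_mul π))).div_const _).congr_deriv ?_
  field_simp
  ring

theorem abs_le_of_hasDerivAt_backwardFlowField {a c β : ℝ} {y : ℝ → ℝ} (ha : 0 < a)
    (hc : 0 < c) (hβ : 0 < β) (hsmall : β * (exp (12 * (a * c)) / a) ≤ 1 / 2)
    (hy0 : y (-1) = 0)
    (hy : ∀ x ∈ Icc (-1 : ℝ) 1, HasDerivAt y (backwardFlowField a c β x (y x)) x) :
    ∀ x ∈ Icc (-1 : ℝ) 1, |y x| ≤ β * (exp (12 * (a * c)) / a) := by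
  have hbarrier : 2 * c * β / (2 * (a * c)) * exp (3 * (2 * (a * c)) * (1 - -1)) =
      β * (exp (12 * (a * c)) / a) := by
    field_simp
    ring_nf
  rw [← hbarrier] at hsmall ⊢
  exact abs_le_of_abs_deriv_le_mul_abs_add (by positivity) (by positivity) hy
    (by rw [hy0, abs_zero]; positivity) hsmall
    fun x _ hx ↦ abs_backwardFlowField_le ha.le hc.le hβ.le hx

theorem le_exp_mul_of_hasDerivAt_backwardFlowField {a c β δ : ℝ} {y : ℝ → ℝ}
    (ha : 0 ≤ a) (hc : 0 ≤ c) (hβ : 0 ≤ β) (hδ : δ ≤ 1 / 2) (hy0 : y (-1) = 0)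
    (hy : ∀ x ∈ Icc (-1 : ℝ) 1, HasDerivAt y (backwardFlowField a c β x (y x)) x)
    (hyδ : ∀ x ∈ Icc (-1 : ℝ) 1, |y x| ≤ δ) :
    c * β * (2 * π * sinh (a * c) / ((a * c) ^ 2 + π ^ 2)) -
      2 * exp (a * c) * (c * β * δ + 4 * (a * c) * δ ^ 2) ≤ exp (a * c) * y 1 := by
  set k := a * c
  set C := c * β * δ + 4 * k * δ ^ 2
  have hC : 0 ≤ C := by
    have := (abs_nonneg _).trans (hyδ (-1) ⟨le_rfl, by norm_num⟩)
    positivity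
  set P : ℝ → ℝ :=
    fun x ↦ exp (k * x) * (k * sin (π * x) - π * cos (π * x)) / (k ^ 2 + π ^ 2)
  set G : ℝ → ℝ := fun x ↦ c * β * P x - exp k * C * x
  have hG : ∀ x, HasDerivAt G (c * β * (exp (k * x) * sin (π * x)) - exp k * C) x := fun x ↦
    ((hasDerivAt_primitive_exp_mul_sin k x).const_mul (c * β)).fun_sub
      (((hasDerivAt_id' x).const_mul (exp k * C)).congr_deriv (mul_one _))
  have hQ : ∀ x ∈ Icc (-1 : ℝ) 1, HasDerivAt (fun x ↦ exp (k * x) * y x)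
      (exp (k * x) * (backwardFlowField a c β x (y x) + k * y x)) x := fun x hx ↦ by
    refine ((((hasDerivAt_id x).const_mul k).exp).mul (hy x hx)).congr_deriv ?_
    simp only [id]
    ring
  have hderiv : ∀ x ∈ Icc (-1 : ℝ) 1, c * β * (exp (k * x) * sin (π * x)) - exp k * C ≤
      exp (k * x) * (backwardFlowField a c β x (y x) + k * y x) := fun x hx ↦ by
    have hexp : exp (k * x) ≤ exp k := exp_le_exp.2 (by nlinarith [hx.2, mul_nonneg ha hc])
    have := mul_le_mul_of_nonneg_left
      (sub_le_backwardFlowField_add (x := x) ha hc hβ (hyδ x hx) hδ) (exp_pos (k * x)).le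
    nlinarith [mul_le_mul_of_nonneg_right hexp hC]
  have hcomp := image_le_of_deriv_right_le_deriv_boundary (f := fun x ↦ G x - G (-1))
    (fun x _ ↦ ((hG x).sub_const _).continuousAt.continuousWithinAt)
    (fun x _ ↦ ((hG x).sub_const _).hasDerivWithinAt) (by simp [hy0])
    (fun x hx ↦ (hQ x hx).continuousAt.continuousWithinAt)
    (fun x hx ↦ (hQ x (Ico_subset_Icc_self hx)).hasDerivWithinAt)
    (fun x hx ↦ hderiv x (Ico_subset_Icc_self hx)) (b := 1) ⟨by norm_num, le_rfl⟩
  have hG1 : G 1 - G (-1) = c * β * (2 * π * sinh k / (k ^ 2 + π ^ 2)) - 2 * exp k * C := by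
    simp only [G, P, mul_one, mul_neg, sin_neg, cos_neg, sin_pi, cos_pi, sinh_eq]
    ring
  simpa [hG1] using hcomp

/-- Key lemma for instability with negative bare mass: the solution of the backward-flow
ODE `dy/dx = (a/(2|m|))(1 + sin y)(β sin(πx) − a sec(y) tan(y))` with `y(−1) = 0`
satisfies `y(1) > 0` for all sufficiently small `β > 0`. -/
theorem backward_flow_positive_at_one
    (a m : ℝ) (ha : 0 < a) (hm : m < 0) :
    ∃ ε > (0 : ℝ), ∀ β : ℝ, 0 < β → β < ε →
      ∀ y : ℝ → ℝ,
        y (-1) = 0 →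
        (∀ x ∈ Set.Icc (-1 : ℝ) 1,
          HasDerivAt y
            ((a / (2 * |m|)) * (1 + sin (y x)) *
              (β * sin (π * x) - a * (1 / cos (y x)) * tan (y x))) x) →
        y 1 > 0 := by
  have hc : 0 < a / (2 * |m|) := by have := abs_pos.2 hm.ne; positivity
  set c := a / (2 * |m|)
  set k := a * c
  set M := exp (12 * k) / a
  set L := 2 * π * sinh k / (k ^ 2 + π ^ 2)
  have hL : 0 < L := div_pos (by have := sinh_pos_iff.2 (mul_pos ha hc); positivity) (by positivity)
  set C := c * M + 4 * k * M ^ 2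
  refine ⟨min (1 / (2 * M)) (c * L / (2 * exp k * C)), by positivity,
    fun β hβ hβε y hy0 hy ↦ ?_⟩
  have hβM : β * M ≤ 1 / 2 := by
    have := (lt_min_iff.1 hβε).1
    rw [lt_div_iff₀ (by positivity)] at this
    linarith
  have hβC : 2 * exp k * C * β < c * L := by
    have := (lt_min_iff.1 hβε).2
    rwa [lt_div_iff₀ (by positivity), mul_comm] at this
  have hyM : ∀ x ∈ Icc (-1 : ℝ) 1, |y x| ≤ β * M :=
    abs_le_of_hasDerivAt_backwardFlowField ha hc hβ hβM hy0 hy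
  have hlow := le_exp_mul_of_hasDerivAt_backwardFlowField ha.le hc.le hβ.le hβM hy0 hy hyM
  have hpos : 0 < exp k * y 1 := calc
    0 < β * (c * L - 2 * exp k * C * β) := mul_pos hβ (by linarith)
    _ = c * β * L - 2 * exp k * (c * β * (β * M) + 4 * k * (β * M) ^ 2) := by ring
    _ ≤ exp k * y 1 := hlow
  exact pos_of_mul_pos_right hpos (exp_pos k).le
end

section
/- Let a > 0 and m < 0 be real constants, and let Z : [−1, 1] → ℝ be the C¹ solution of the linear ODE Z'(x) = (a/(2|m|))·sin(πx) − (a²/(2|m|))·Z(x) with Z(−1) = 0. Then Z(x) = (a/(2|m|))·e^{−a²x/(2|m|)}·∫_{−1}^{x} sin(πt)·e^{a²t/(2|m|)} dt, and Z(1) = 2π·a·|m|·(1 − e^{−a²/|m|}) / (4π²m² + a⁴) > 0. -/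
open Real

/-!
With `c = a²/(2|m|)`, the integrating factor `e^{ct}` turns the equation into
`(Z e^{ct})' = (a/(2|m|)) sin(πt) e^{ct}`, which integrates from `Z(−1) = 0` to the formula for `Z`.
The integrand has the elementary primitive `e^{ct}(c sin πt − π cos πt)/(c² + π²)`, so
`Z(1) = (a/|m|) π e^{−c} sinh c/(c² + π²)`, which is positive because `c > 0`.
-/

open Set intervalIntegral MeasureTheory in
theorem mul_exp_sub_eq_integral_of_hasDerivAt {f Z : ℝ → ℝ} {c x₀ x₁ x : ℝ}
    (hf : IntervalIntegrable f volume x₀ x₁)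
    (hZ : ∀ x ∈ Icc x₀ x₁, HasDerivAt Z (f x - c * Z x) x) (hx : x ∈ Icc x₀ x₁) :
    Z x * exp (c * x) - Z x₀ * exp (c * x₀) = ∫ t in x₀..x, f t * exp (c * t) := by
  have hsub : uIcc x₀ x ⊆ Icc x₀ x₁ := by
    rw [uIcc_of_le hx.1]; exact Icc_subset_Icc_right hx.2
  refine (integral_eq_sub_of_hasDerivAt (f := fun t => Z t * exp (c * t))
    (fun t ht => ?_) ?_).symm
  · have hexp : HasDerivAt (fun t => exp (c * t)) (exp (c * t) * c) t :=
      ((hasDerivAt_id t).const_mul c).exp.congr_deriv (by simp)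
    exact ((hZ t (hsub ht)).mul hexp).congr_deriv (by ring)
  · exact (hf.mono_set (by rwa [uIcc_of_le (hx.1.trans hx.2)])).mul_continuousOn
      (by fun_prop)

theorem hasDerivAt_exp_mul_sin_primitive {c ω : ℝ} (h : c ^ 2 + ω ^ 2 ≠ 0) (t : ℝ) :
    HasDerivAt (fun t => exp (c * t) * (c * sin (ω * t) - ω * cos (ω * t)) / (c ^ 2 + ω ^ 2))
      (sin (ω * t) * exp (c * t)) t := by
  have hexp := ((hasDerivAt_id t).const_mul c).exp
  have hsin := ((hasDerivAt_id t).const_mul ω).sin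
  have hcos := ((hasDerivAt_id t).const_mul ω).cos
  refine ((hexp.mul ((hsin.const_mul c).sub (hcos.const_mul ω))).div_const _).congr_deriv ?_
  simp only [id, mul_one, Pi.sub_apply]
  field_simp
  ring

theorem integral_sin_pi_mul_mul_exp (c : ℝ) :
    ∫ t in (-1 : ℝ)..1, sin (π * t) * exp (c * t) = 2 * π * sinh c / (c ^ 2 + π ^ 2) := by
  have h : c ^ 2 + π ^ 2 ≠ 0 := by positivity
  rw [intervalIntegral.integral_eq_sub_of_hasDerivAt
    (fun t _ => hasDerivAt_exp_mul_sin_primitive h t)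
    ((by fun_prop : Continuous _).intervalIntegrable _ _)]
  simp only [mul_one, mul_neg_one, sin_pi, sin_neg, cos_pi, cos_neg, sinh_eq]
  ring

theorem exp_neg_mul_sinh (c : ℝ) : exp (-c) * sinh c = (1 - exp (-(2 * c))) / 2 := by
  have h : exp (-c) * exp c = 1 := by rw [← exp_add, neg_add_cancel, exp_zero]
  rw [sinh_eq, two_mul, neg_add, exp_add]
  linear_combination h / 2

/-- The linearization `Z = ∂y/∂β |_{β=0}` of the backward flow: the solution of
`Z' = (a/(2|m|)) sin(πx) − (a²/(2|m|)) Z`, `Z(−1) = 0`, is given by the explicit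
integral formula, and `Z(1) = 2πa|m|(1 − e^{−a²/|m|})/(4π²m² + a⁴) > 0`. -/
theorem linearized_backward_flow
    (a m : ℝ) (ha : 0 < a) (hm : m < 0)
    (Z : ℝ → ℝ) (hZ0 : Z (-1) = 0)
    (hode : ∀ x ∈ Set.Icc (-1 : ℝ) 1,
      HasDerivAt Z ((a / (2 * |m|)) * sin (π * x) - (a ^ 2 / (2 * |m|)) * Z x) x) :
    (∀ x ∈ Set.Icc (-1 : ℝ) 1,
      Z x = (a / (2 * |m|)) * exp (-(a ^ 2 * x) / (2 * |m|)) *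
        ∫ t in (-1 : ℝ)..x, sin (π * t) * exp ((a ^ 2 * t) / (2 * |m|))) ∧
    Z 1 = 2 * π * a * |m| * (1 - exp (-(a ^ 2) / |m|)) / (4 * π ^ 2 * m ^ 2 + a ^ 4) ∧
    0 < Z 1 := by
  have hM : 0 < |m| := abs_pos.2 hm.ne
  set c := a ^ 2 / (2 * |m|) with hc
  have hexponent (t : ℝ) : a ^ 2 * t / (2 * |m|) = c * t := (div_mul_eq_mul_div _ _ _).symm
  have hsol : ∀ x ∈ Set.Icc (-1 : ℝ) 1,
      Z x = a / (2 * |m|) * exp (-(c * x)) * ∫ t in (-1 : ℝ)..x, sin (π * t) * exp (c * t) := by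
    intro x hx
    have h := mul_exp_sub_eq_integral_of_hasDerivAt (f := fun t => a / (2 * |m|) * sin (π * t))
      ((by fun_prop : Continuous _).intervalIntegrable _ _) hode hx
    simp only [hZ0, zero_mul, sub_zero, mul_assoc, intervalIntegral.integral_const_mul] at h
    rw [mul_right_comm, ← h, exp_neg, mul_inv_cancel_right₀ (exp_pos _).ne']
  have hZ1 : Z 1 = 2 * π * a * |m| * (1 - exp (-(a ^ 2) / |m|)) / (4 * π ^ 2 * m ^ 2 + a ^ 4) := by
    have hexp : -(a ^ 2) / |m| = -(2 * c) := by rw [hc]; field_simp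
    rw [hsol 1 ⟨by norm_num, le_rfl⟩, mul_one, integral_sin_pi_mul_mul_exp, hexp, ← sq_abs m,
      show 1 - exp (-(2 * c)) = 2 * (exp (-c) * sinh c) by rw [exp_neg_mul_sinh]; ring, hc]
    field_simp
    ring
  refine ⟨fun x hx => by simpa only [neg_div, hexponent] using hsol x hx, hZ1, ?_⟩
  have hgap : 0 < 1 - exp (-(a ^ 2) / |m|) :=
    sub_pos.2 (exp_lt_one_iff.2 (div_neg_of_neg_of_pos (neg_neg_of_pos (by positivity)) hM))
  rw [hZ1]
  positivity
end
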